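/- arXiv:2312.14397 — 4 statements merged into one kernel-verified Lean document; each statement's English description precedes it below -/
import Mathlib

section
/- Let S be a reduced string with a simple partial order ≤ on its alphabet, let a be the unlonely letter whose second occurrence is earliest, and suppose the earliest minimal lonely letter b exists and occurs strictly between the first two occurrences of a. Suppose both a and b are minimal with respect to ≤ and b does not occur immediately after the first occurrence of a in S. Then (S, ≤) is a-decided, unless there is exactly one unlonely letter z strictly between the first two occurrences of a. -/
open List

universe u

variable {Γ : Type u}

/-- No three letters `a <ℓ b <ℓ c` occur in `S` as a subsequence in the order `b, c, a`. -/
def NoBCA (S : List Γ) (le : Γ → Γ → Prop) : Prop :=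
  ∀ a b c : Γ, le a b → a ≠ b → le b c → b ≠ c → ¬ ([b, c, a] <+ S)

/-- The pair `(S, le)` is foot-sortable: some linear order extending `le` avoids the
`b, c, a` configuration. -/
def PairFootSortable (S : List Γ) (le : Γ → Γ → Prop) : Prop :=
  ∃ le' : Γ → Γ → Prop, IsLinearOrder Γ le' ∧ (∀ x y, le x y → le' x y) ∧ NoBCA S le'

/-- The sock ordering `S` is foot-sortable. -/
def FootSortable (S : List Γ) : Prop :=
  ∃ le : Γ → Γ → Prop, IsLinearOrder Γ le ∧ NoBCA S le

/-- `(S, le)` is `Γ'`-decided. -/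
def DecidedBy (S : List Γ) (le : Γ → Γ → Prop) (Γ' : Set Γ) : Prop :=
  ¬ PairFootSortable S le ∨
    ∃ le' : Γ → Γ → Prop, IsLinearOrder Γ le' ∧ (∀ x y, le x y → le' x y) ∧
      (∃ m ∈ Γ', ∀ x, le' m x) ∧ NoBCA S le'

/-- `le` is a simple partial order with respect to `S`: there is a prefix of `S`
such that `x ≥ y` iff `x = y` or `x y` occurs as a subsequence of the prefix. -/
def SimpleOrder (S : List Γ) (le : Γ → Γ → Prop) : Prop :=
  ∃ k ≤ S.length, ∀ x y : Γ, le y x ↔ (x = y ∨ [x, y] <+ S.take k)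

/-- Index of the second occurrence of `a` in `S` (meaningful when `a` occurs twice). -/
def secondIdx [DecidableEq Γ] (S : List Γ) (a : Γ) : ℕ :=
  S.idxOf a + 1 + (S.drop (S.idxOf a + 1)).idxOf a

/-- The letters of `S` strictly between the first two occurrences of `a`. -/
def betweenFirstTwo [DecidableEq Γ] (S : List Γ) (a : Γ) : List Γ :=
  (S.drop (S.idxOf a + 1)).takeWhile (fun c => c != a)

/-- Every color occurs at most twice. -/
def TwoBounded [DecidableEq Γ] (S : List Γ) : Prop := ∀ x : Γ, S.count x ≤ 2

/-- A minimal non-foot-sortable 2-bounded sock ordering. -/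
def Critical [DecidableEq Γ] (S : List Γ) : Prop :=
  TwoBounded S ∧ ¬ FootSortable S ∧ ∀ i < S.length, FootSortable (S.eraseIdx i)

/-- The tail `a_{n-2} a_{n-1} a_{n-3} a_{n-2} ⋯ a₀ a₁`. -/
def tailPairs (a : ℕ → Γ) (n : ℕ) : List Γ :=
  ((List.range (n - 1)).reverse).flatMap fun i => [a i, a (i + 1)]

/-- Type A: `x a₀ y a_{n-1} x a_{n-2} a_{n-1} ⋯ a₀ a₁`. -/
def typeA (a : ℕ → Γ) (x y : Γ) (n : ℕ) : List Γ :=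
  x :: a 0 :: y :: a (n - 1) :: x :: tailPairs a n

/-- Type B: `a₀ x y a_{n-1} x y a_{n-2} a_{n-1} ⋯ a₀ a₁`. -/
def typeB (a : ℕ → Γ) (x y : Γ) (n : ℕ) : List Γ :=
  a 0 :: x :: y :: a (n - 1) :: x :: y :: tailPairs a n

/-- Type B': `a₀ y x a_{n-1} x y a_{n-2} a_{n-1} ⋯ a₀ a₁`. -/
def typeB' (a : ℕ → Γ) (x y : Γ) (n : ℕ) : List Γ :=
  a 0 :: y :: x :: a (n - 1) :: x :: y :: tailPairs a n

/-- Type C: `a₀ x a_{n-1} y z y x a_{n-2} a_{n-1} ⋯ a₀ a₁`. -/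
def typeC (a : ℕ → Γ) (x y z : Γ) (n : ℕ) : List Γ :=
  a 0 :: x :: a (n - 1) :: y :: z :: y :: x :: tailPairs a n

/-- `S` contains `P` as a pattern. -/
def ContainsPattern {Δ : Type*} (S : List Γ) (P : List Δ) : Prop :=
  ∃ f : Δ → Γ, (∀ i ∈ P, ∀ j ∈ P, f i = f j → i = j) ∧ P.map f <+ S

/-- The 14 sporadic critical sock orderings, with `a,b,c,d,e,f` encoded as `0,…,5`. -/
def sporadicPatterns : List (List ℕ) :=
  [[0,1,2,3,1,0,2,3], [0,1,2,3,4,3,0,1,2],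
   [0,1,2,0,3,1,3,2], [0,1,2,1,3,0,3,2], [0,1,2,3,1,0,3,2], [0,1,2,3,2,0,3,1],
   [0,1,2,3,2,4,0,4,1], [0,1,2,3,4,3,0,2,1],
   [0,1,2,3,1,2,0,3], [0,1,2,3,2,1,0,3], [0,1,2,3,4,3,1,0,2],
   [0,1,2,0,1,3,4,3,2], [0,1,2,3,0,3,4,3,2], [0,1,2,3,2,0,4,5,4,1]]

/-- The forbidden patterns: the 14 sporadic orderings and the four infinite families,
realized over `ℕ` with `aᵢ = i`, `x = n`, `y = n + 1`, `z = n + 2`. -/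
def Forbidden (P : List ℕ) : Prop :=
  P ∈ sporadicPatterns ∨
    (∃ n, 2 ≤ n ∧ P = typeA (fun i => i) n (n + 1) n) ∨
    (∃ n, 3 ≤ n ∧ P = typeB (fun i => i) n (n + 1) n) ∨
    (∃ n, 3 ≤ n ∧ P = typeB' (fun i => i) n (n + 1) n) ∨
    (∃ n, 3 ≤ n ∧ P = typeC (fun i => i) n (n + 1) (n + 2) n)

section MyHelpers
variable [DecidableEq Γ]
set_option linter.unusedSectionVars false

theorem myIndexOf_le {S : List Γ} {x : Γ} {j : ℕ} (hj : j < S.length) (hx : S[j] = x) :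
    S.idxOf x ≤ j := by
  by_contra h
  push_neg at h
  have hmem : x ∈ S.take (S.idxOf x) := by
    rw [mem_take_iff_getElem]
    exact ⟨j, by omega, hx⟩
  have := List.false_of_mem_take_findIdx (p := (· == x)) hmem
  simp at this

theorem myNot_mem_take {S : List Γ} {x : Γ} {j : ℕ} (hj : j ≤ S.idxOf x) : x ∉ S.take j := by
  intro hmem
  rw [mem_take_iff_getElem] at hmem
  obtain ⟨i, hi, hix⟩ := hmem
  have := myIndexOf_le (by omega : i < S.length) hix
  omega

theorem myGetElem_congr {S : List Γ} {i j : ℕ} (h : i = j) (hi : i < S.length) (hj : j < S.length) :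
    S[i]'hi = S[j]'hj := by subst h; rfl

theorem myGetElem_list {S T : List Γ} (h : S = T) {i : ℕ} (hi : i < S.length) :
    S[i]'hi = T[i]'(h ▸ hi) := by subst h; rfl

theorem mySublist_pair {S : List Γ} {i j : ℕ} (hij : i < j) (hj : j < S.length) :
    [S[i], S[j]] <+ S := by
  conv_rhs => rw [← S.take_append_drop (i + 1)]
  have h1 : [S[i]] <+ S.take (i + 1) := by
    rw [singleton_sublist, mem_take_iff_getElem]
    exact ⟨i, by omega, rfl⟩
  have h2 : [S[j]] <+ S.drop (i + 1) := by
    rw [singleton_sublist]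
    have hlen : j - (i + 1) < (S.drop (i + 1)).length := by simp; omega
    have : (S.drop (i + 1))[j - (i+1)] = S[j] := by
      rw [List.getElem_drop]; congr 1; omega
    exact this ▸ List.getElem_mem hlen
  exact List.Sublist.append h1 h2

theorem mySublist_triple {S : List Γ} {i j l : ℕ} (hij : i < j) (hjl : j < l)
    (hl : l < S.length) : [S[i], S[j], S[l]] <+ S := by
  conv_rhs => rw [← S.take_append_drop (i + 1)]
  have h1 : [S[i]] <+ S.take (i + 1) := by
    rw [singleton_sublist, mem_take_iff_getElem]
    exact ⟨i, by omega, rfl⟩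
  have hjd : j - (i+1) < (S.drop (i+1)).length := by simp; omega
  have hld : l - (i+1) < (S.drop (i+1)).length := by simp; omega
  have ej : (S.drop (i + 1))[j - (i+1)] = S[j] := by
    rw [List.getElem_drop]; congr 1; omega
  have el : (S.drop (i + 1))[l - (i+1)] = S[l] := by
    rw [List.getElem_drop]; congr 1; omega
  have h2 : [S[j], S[l]] <+ S.drop (i + 1) := by
    rw [← ej, ← el]
    exact mySublist_pair (by omega) hld
  exact List.Sublist.append h1 h2

theorem myTwo_le_count {S : List Γ} {x : Γ} {i j : ℕ} (hij : i < j) (hj : j < S.length)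
    (hi : S[i] = x) (hjx : S[j] = x) : 2 ≤ S.count x := by
  have h := mySublist_pair hij hj
  rw [hi, hjx] at h
  have := h.count_le x
  simpa using this

theorem myLonely_indexOf {S : List Γ} {x : Γ} {j : ℕ} (h1 : S.count x = 1)
    (hj : j < S.length) (hx : S[j] = x) : S.idxOf x = j := by
  have hle := myIndexOf_le hj hx
  rcases Nat.lt_or_ge (S.idxOf x) j with h | h
  · have hix : S.idxOf x < S.length := by omega
    have := myTwo_le_count h hj (List.getElem_idxOf hix) hx
    omega
  · omega

theorem mySecondIdx_spec {S : List Γ} {x : Γ} (h2 : 2 ≤ S.count x) :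
    ∃ h : secondIdx S x < S.length, S[secondIdx S x]'h = x ∧ S.idxOf x < secondIdx S x := by
  have hmem : x ∈ S := count_pos_iff.1 (by omega)
  have hix : S.idxOf x < S.length := idxOf_lt_length_iff.2 hmem
  have hnt : x ∉ S.take (S.idxOf x) := myNot_mem_take le_rfl
  have htake : S.count x = (S.take (S.idxOf x + 1)).count x + (S.drop (S.idxOf x + 1)).count x := by
    conv_lhs => rw [← S.take_append_drop (S.idxOf x + 1)]
    rw [count_append]
  have htk : (S.take (S.idxOf x + 1)).count x = 1 := by
    rw [List.take_succ]
    rw [count_append]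
    have : S[S.idxOf x]? = some x := by
      rw [List.getElem?_eq_getElem hix, List.getElem_idxOf hix]
    rw [this]
    simp [count_eq_zero.2 hnt]
  have hdrop : 0 < (S.drop (S.idxOf x + 1)).count x := by omega
  have hmemd : x ∈ S.drop (S.idxOf x + 1) := count_pos_iff.1 hdrop
  have hidx : (S.drop (S.idxOf x + 1)).idxOf x < (S.drop (S.idxOf x + 1)).length :=
    idxOf_lt_length_iff.2 hmemd
  have hlen : (S.drop (S.idxOf x + 1)).length = S.length - (S.idxOf x + 1) := by simp
  have hlt : secondIdx S x < S.length := by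
    unfold secondIdx; omega
  refine ⟨hlt, ?_, ?_⟩
  · have := List.getElem_idxOf hidx
    rw [List.getElem_drop] at this
    exact this
  · unfold secondIdx; omega

end MyHelpers

/-- In the setting of Case 3, if both `a, b` are minimal and `b` is not immediately
after the first occurrence of `a`, then `(S, le)` is `a`-decided unless there is
exactly one unlonely letter `z` strictly between the first two occurrences of `a`. -/

theorem statement11 {Γ : Type u} [DecidableEq Γ] (S : List Γ) (le : Γ → Γ → Prop)
    (hpo : IsPartialOrder Γ le) (hred : List.Chain' (· ≠ ·) S)
    (hsimp : SimpleOrder S le)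
    (a : Γ) (ha : 2 ≤ S.count a)
    (haE : ∀ c : Γ, 2 ≤ S.count c → secondIdx S a ≤ secondIdx S c)
    (b : Γ) (hb : S.count b = 1) (hbmin : ∀ x, le x b → x = b)
    (hbE : ∀ c : Γ, S.count c = 1 → (∀ x, le x c → x = c) → S.idxOf b ≤ S.idxOf c)
    (hb1 : S.idxOf a < S.idxOf b) (hb2 : S.idxOf b < secondIdx S a)
    (hamin : ∀ w, le w a → w = a)
    (hnadj : S.idxOf b ≠ S.idxOf a + 1)
    (hexc : ¬ ∃ z : Γ, 2 ≤ S.count z ∧ z ∈ betweenFirstTwo S a ∧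
      ∀ w ∈ betweenFirstTwo S a, 2 ≤ S.count w → w = z) :
    DecidedBy S le {a} := by
  classical
  rcases hsimp with ⟨k, hkS, hk⟩
  by_cases hfs : PairFootSortable S le
  case neg => exact Or.inl hfs
  obtain ⟨le'', hlin, hext, hnb⟩ := hfs
  have htot : ∀ x y : Γ, le'' x y ∨ le'' y x := hlin.toTotal.total
  have hanti : ∀ x y : Γ, le'' x y → le'' y x → x = y := fun x y h h' =>
    hlin.toIsPartialOrder.toAntisymm.antisymm x y h h'
  have htrans : ∀ x y z : Γ, le'' x y → le'' y z → le'' x z := fun x y z h h' =>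
    hlin.toIsPartialOrder.toIsPreorder.toIsTrans.trans x y z h h'
  have memA : a ∈ S := count_pos_iff.1 (by omega)
  have hia : S.idxOf a < S.length := idxOf_lt_length_iff.2 memA
  have memB : b ∈ S := count_pos_iff.1 (by omega)
  have hib : S.idxOf b < S.length := idxOf_lt_length_iff.2 memB
  have hSa : S[S.idxOf a] = a := List.getElem_idxOf hia
  obtain ⟨hs2a_lt, hs2a_eq, hs2a_gt⟩ := mySecondIdx_spec (x := a) (S := S) ha
  have hadj : ∀ i, (h : i + 1 < S.length) → S[i] ≠ S[i+1] := by
    intro i h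
    have := List.isChain_iff_getElem.1 hred i (by omega)
    simpa using this
  have hib2 : S.idxOf a + 2 ≤ S.idxOf b := by omega
  have hia1 : S.idxOf a + 1 < S.length := by omega
  have hs2a3 : S.idxOf a + 3 ≤ secondIdx S a := by omega
  have hanc : a ≠ S[S.idxOf a + 1] := by
    have := hadj (S.idxOf a) hia1
    rwa [hSa] at this
  -- k is at most indexOf a + 1
  have hkle : k ≤ S.idxOf a + 1 := by
    by_contra hgt
    push_neg at hgt
    have hlen : S.idxOf a + 1 < (S.take k).length := by
      rw [List.length_take]; omega
    have hsub : [a, S[S.idxOf a + 1]] <+ S.take k := by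
      have := mySublist_pair (S := S.take k) (i := S.idxOf a) (j := S.idxOf a + 1)
        (by omega) hlen
      simpa [List.getElem_take, hSa] using this
    have : le (S[S.idxOf a + 1]) a := (hk a (S[S.idxOf a + 1])).2 (Or.inr hsub)
    exact hanc ((hamin _ this)).symm
  -- the letter right after the first a is unlonely
  have hcS : S[S.idxOf a + 1] ∈ S := List.getElem_mem hia1
  have hc2 : 2 ≤ S.count (S[S.idxOf a + 1]) := by
    by_contra hlt
    have hc1 : S.count (S[S.idxOf a + 1]) = 1 := by
      have := count_pos_iff.2 hcS; omega
    have hidxc : S.idxOf (S[S.idxOf a + 1]) = S.idxOf a + 1 :=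
      myLonely_indexOf hc1 hia1 rfl
    have hmin : ∀ x, le x (S[S.idxOf a + 1]) → x = S[S.idxOf a + 1] := by
      intro x hx
      rcases (hk (S[S.idxOf a + 1]) x).1 hx with h | h
      · exact h.symm
      · exfalso
        have hcmem : S[S.idxOf a + 1] ∈ S.take k := h.subset (List.mem_cons_self)
        exact myNot_mem_take (by omega) hcmem
    have := hbE _ hc1 hmin
    omega
  -- c is in betweenFirstTwo
  have hdropc : S.drop (S.idxOf a + 1) = S[S.idxOf a + 1] :: S.drop (S.idxOf a + 1 + 1) := by
    rw [List.drop_eq_getElem_cons hia1]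
  have hcbet : S[S.idxOf a + 1] ∈ betweenFirstTwo S a := by
    unfold betweenFirstTwo
    rw [hdropc, List.takeWhile_cons]
    simp only [bne_iff_ne, ne_eq, Ne.symm hanc, not_false_eq_true, if_true, reduceIte]
    exact List.mem_cons_self
  -- get a second unlonely letter between the two a's
  push_neg at hexc
  obtain ⟨w, hwbet, hw2, hwc⟩ := hexc (S[S.idxOf a + 1]) hc2 hcbet
  have hwa : w ≠ a := by
    have := List.mem_takeWhile_imp hwbet
    simpa using this
  -- locate w strictly between the two occurrences of a
  have hm_eq : secondIdx S a = S.idxOf a + 1 + (S.drop (S.idxOf a + 1)).idxOf a := rfl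
  have hmlt : (S.drop (S.idxOf a + 1)).idxOf a < (S.drop (S.idxOf a + 1)).length := by
    have hdl_len : (S.drop (S.idxOf a + 1)).length = S.length - (S.idxOf a + 1) := by simp
    by_contra hna
    push_neg at hna
    have hnmem : a ∉ S.drop (S.idxOf a + 1) := by
      intro hmem
      have := idxOf_lt_length_iff.2 hmem
      omega
    have := idxOf_eq_length hnmem
    omega
  have hdl_len : (S.drop (S.idxOf a + 1)).length = S.length - (S.idxOf a + 1) := by simp
  have htwlen : (betweenFirstTwo S a).length ≤ (S.drop (S.idxOf a + 1)).idxOf a := by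
    by_contra hlt'
    push_neg at hlt'
    have hpre := List.takeWhile_prefix (l := S.drop (S.idxOf a + 1)) (p := fun c => c != a)
    have hgetm : (betweenFirstTwo S a)[(S.drop (S.idxOf a + 1)).idxOf a]'hlt' =
        (S.drop (S.idxOf a + 1))[(S.drop (S.idxOf a + 1)).idxOf a]'hmlt :=
      hpre.getElem hlt'
    have hval : (S.drop (S.idxOf a + 1))[(S.drop (S.idxOf a + 1)).idxOf a]'hmlt = a :=
      List.getElem_idxOf hmlt
    have hmem' := List.getElem_mem hlt'
    have := List.mem_takeWhile_imp (hmem' : _ ∈ betweenFirstTwo S a)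
    rw [hgetm, hval] at this
    simp at this
  obtain ⟨j', hj', hj'w⟩ := List.mem_iff_getElem.1 hwbet
  have hj'm : j' < (S.drop (S.idxOf a + 1)).idxOf a := by omega
  have hj'S : j' < (S.drop (S.idxOf a + 1)).length := by omega
  have hSw : S[S.idxOf a + 1 + j']'(by omega) = w := by
    have hpre := List.takeWhile_prefix (l := S.drop (S.idxOf a + 1)) (p := fun c => c != a)
    have h1 : (betweenFirstTwo S a)[j']'hj' = (S.drop (S.idxOf a + 1))[j']'hj'S :=
      hpre.getElem hj'
    have h2 : (S.drop (S.idxOf a + 1))[j']'hj'S = S[S.idxOf a + 1 + j']'(by omega) :=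
      (List.getElem_drop' (xs := S) (i := S.idxOf a + 1) (j := j') (by omega)).symm
    rw [← h2, ← h1, hj'w]
  have hj'0 : j' ≠ 0 := by
    intro h
    subst h
    apply hwc
    rw [← hSw]
  have hjw_lt : S.idxOf a + 1 + j' < secondIdx S a := by omega
  have hjw_ge : S.idxOf a + 2 ≤ S.idxOf a + 1 + j' := by omega
  -- second occurrences of c and w
  obtain ⟨hs2c_lt, hs2c_eq, hs2c_gt⟩ := mySecondIdx_spec hc2
  obtain ⟨hs2w_lt, hs2w_eq, hs2w_gt⟩ := mySecondIdx_spec hw2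
  have hs2ac : secondIdx S a < secondIdx S (S[S.idxOf a + 1]) := by
    rcases Nat.lt_or_ge (secondIdx S a) (secondIdx S (S[S.idxOf a + 1])) with h | h
    · exact h
    · exfalso
      have hle' := haE _ hc2
      have heq : secondIdx S a = secondIdx S (S[S.idxOf a + 1]) := by omega
      exact hanc (hs2a_eq.symm.trans ((myGetElem_congr heq hs2a_lt hs2c_lt).trans hs2c_eq))
  have hs2aw : secondIdx S a < secondIdx S w := by
    rcases Nat.lt_or_ge (secondIdx S a) (secondIdx S w) with h | h
    · exact h
    · exfalso
      have hle' := haE _ hw2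
      have heq : secondIdx S a = secondIdx S w := by omega
      exact hwa (hs2w_eq.symm.trans ((myGetElem_congr heq.symm hs2w_lt hs2a_lt).trans hs2a_eq))
  -- a is below c in any NoBCA linear extension
  have hac : le'' a (S[S.idxOf a + 1]) := by
    by_contra hn
    have hca' : le'' (S[S.idxOf a + 1]) a := (htot a _).resolve_left hn
    rcases htot w (S[S.idxOf a + 1]) with hwc' | hcw'
    · -- forbid [c, a, w]
      have hsub : [S[S.idxOf a + 1], a, w] <+ S := by
        have := mySublist_triple (S := S) (i := S.idxOf a + 1) (j := secondIdx S a)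
          (l := secondIdx S w) (by omega) hs2aw hs2w_lt
        rwa [hs2a_eq, hs2w_eq] at this
      exact hnb w (S[S.idxOf a + 1]) a hwc' hwc (hca') (Ne.symm hanc) hsub
    · rcases htot w a with hwa' | haw'
      · -- forbid [w, a, c]
        have hsub : [w, a, S[S.idxOf a + 1]] <+ S := by
          have := mySublist_triple (S := S) (i := S.idxOf a + 1 + j') (j := secondIdx S a)
            (l := secondIdx S (S[S.idxOf a + 1])) hjw_lt hs2ac hs2c_lt
          rwa [hSw, hs2a_eq, hs2c_eq] at this
        exact hnb (S[S.idxOf a + 1]) w a hcw' (fun h => hwc h.symm) hwa' hwa hsub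
      · -- forbid [a, w, c]
        have hsub : [a, w, S[S.idxOf a + 1]] <+ S := by
          have := mySublist_triple (S := S) (i := S.idxOf a) (j := S.idxOf a + 1 + j')
            (l := secondIdx S (S[S.idxOf a + 1])) (by omega) (by omega) hs2c_lt
          rwa [hSa, hSw, hs2c_eq] at this
        exact hnb (S[S.idxOf a + 1]) a w hca' (Ne.symm hanc) haw' (Ne.symm hwa) hsub
  -- any unlonely letter is above a
  have hUn : ∀ q, q ≠ a → 2 ≤ S.count q → le'' q a → False := by
    intro q hqa hq2 hqle
    have hqc : q ≠ S[S.idxOf a + 1] := by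
      intro h
      exact hqa (hanti _ _ (h ▸ hac) hqle).symm
    obtain ⟨hs2q_lt, hs2q_eq, hs2q_gt⟩ := mySecondIdx_spec hq2
    have hs2q3 : S.idxOf a + 1 < secondIdx S q := by
      have := haE q hq2
      omega
    have hsub : [a, S[S.idxOf a + 1], q] <+ S := by
      have := mySublist_triple (S := S) (i := S.idxOf a) (j := S.idxOf a + 1)
        (l := secondIdx S q) (by omega) hs2q3 hs2q_lt
      rwa [hSa, hs2q_eq] at this
    exact hnb q a (S[S.idxOf a + 1]) hqle hqa hac hanc hsub
  -- a lonely letter occurring after the first a is above a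
  have hgt : ∀ q, q ≠ a → S.count q = 1 → le'' q a → S.idxOf a < S.idxOf q → False := by
    intro q hqa hq1 hqle hlt
    have hiq : S.idxOf q < S.length := idxOf_lt_length_iff.2 (count_pos_iff.1 (by omega))
    have hSq : S[S.idxOf q] = q := List.getElem_idxOf hiq
    rcases Nat.lt_or_ge (S.idxOf a + 1) (S.idxOf q) with h | h
    · have hsub : [a, S[S.idxOf a + 1], q] <+ S := by
        have := mySublist_triple (S := S) (i := S.idxOf a) (j := S.idxOf a + 1)
          (l := S.idxOf q) (by omega) h hiq
        rwa [hSa, hSq] at this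
      exact hnb q a (S[S.idxOf a + 1]) hqle hqa hac hanc hsub
    · have heq : S.idxOf q = S.idxOf a + 1 := by omega
      have : q = S[S.idxOf a + 1] := by rw [← hSq]; exact myGetElem_congr heq hiq hia1
      rw [this] at hq1
      omega
  -- every letter of S is above a
  have hMin : ∀ q, q ∈ S → q ≠ a → le'' q a → False := by
    have aux : ∀ n q, q ≠ a → S.count q = 1 → le'' q a → S.idxOf a ≤ S.idxOf q + n → False := by
      intro n
      induction n with
      | zero =>
        intro q hqa hq1 hqle hge
        have hne : S.idxOf q ≠ S.idxOf a := by
          intro h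
          have hiq : S.idxOf q < S.length := idxOf_lt_length_iff.2 (count_pos_iff.1 (by omega))
          have hSq : S[S.idxOf q] = q := List.getElem_idxOf hiq
          exact hqa (hSq.symm.trans ((myGetElem_congr h hiq hia).trans hSa))
        exact hgt q hqa hq1 hqle (by omega)
      | succ n ihn =>
        intro q hqa hq1 hqle hge
        have hiq : S.idxOf q < S.length := idxOf_lt_length_iff.2 (count_pos_iff.1 (by omega))
        have hSq : S[S.idxOf q] = q := List.getElem_idxOf hiq
        have hne : S.idxOf q ≠ S.idxOf a := by
          intro h
          exact hqa (hSq.symm.trans ((myGetElem_congr h hiq hia).trans hSa))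
        rcases Nat.lt_or_ge (S.idxOf a) (S.idxOf q) with h | h
        · exact hgt q hqa hq1 hqle h
        · have hplt : S.idxOf q < S.idxOf a := by omega
          rcases Nat.lt_or_ge (S.idxOf q + 1) k with hpk | hpk
          · -- q has a successor inside the prefix defining le
            have hp1 : S.idxOf q + 1 < S.length := by omega
            have hdq : S[S.idxOf q] ≠ S[S.idxOf q + 1] := hadj _ hp1
            have hlen' : S.idxOf q + 1 < (S.take k).length := by
              rw [List.length_take]; omega
            have hsub : [q, S[S.idxOf q + 1]] <+ S.take k := by
              have := mySublist_pair (S := S.take k) (i := S.idxOf q) (j := S.idxOf q + 1)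
                (by omega) hlen'
              simpa [List.getElem_take, hSq] using this
            have hled : le (S[S.idxOf q + 1]) q := (hk q _).2 (Or.inr hsub)
            have hled'' : le'' (S[S.idxOf q + 1]) q := hext _ _ hled
            have hda : le'' (S[S.idxOf q + 1]) a := htrans _ _ _ hled'' hqle
            have hdna : S[S.idxOf q + 1] ≠ a := by
              intro h'
              exact hqa (hanti _ _ hqle (h' ▸ hled''))
            by_cases hd2 : 2 ≤ S.count (S[S.idxOf q + 1])
            · exact hUn _ hdna hd2 hda
            · have hd1 : S.count (S[S.idxOf q + 1]) = 1 := by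
                have := count_pos_iff.2 (List.getElem_mem hp1)
                omega
              have hidxd : S.idxOf (S[S.idxOf q + 1]) = S.idxOf q + 1 :=
                myLonely_indexOf hd1 hp1 rfl
              exact ihn _ hdna hd1 hda (by omega)
          · -- q is minimal for le, contradicting the choice of b
            have hqmin : ∀ x, le x q → x = q := by
              intro x hx
              rcases (hk q x).1 hx with h' | h'
              · exact h'.symm
              · exfalso
                rw [List.cons_sublist_iff] at h'
                obtain ⟨r₁, r₂, heq2, hqr1, hxr2⟩ := h'
                obtain ⟨i, hi, hir⟩ := List.mem_iff_getElem.1 hqr1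
                have hr2ne : r₂ ≠ [] := by
                  intro h''
                  rw [h''] at hxr2
                  simp at hxr2
                have hr2len : 1 ≤ r₂.length := by
                  cases r₂
                  · exact absurd rfl hr2ne
                  · simp
                have hlentk : (S.take k).length = r₁.length + r₂.length := by
                  rw [heq2, List.length_append]
                have hklen : (S.take k).length ≤ k := by
                  rw [List.length_take]; omega
                have hitk : i < (S.take k).length := by omega
                have hget : (S.take k)[i]'hitk = q := by
                  have e1 := myGetElem_list heq2 hitk
                  have e2 : (r₁ ++ r₂)[i]'(heq2 ▸ hitk) = r₁[i]'hi := by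
                    exact List.getElem_append_left hi
                  rw [e1, e2, hir]
                have hgetS : S[i]'(by rw [List.length_take] at hitk; omega) = q := by
                  rw [← hget]
                  exact (List.getElem_take (xs := S)).symm
                have := myIndexOf_le (j := i) (by rw [List.length_take] at hitk; omega) hgetS
                omega
            have := hbE q hq1 hqmin
            omega
    intro q hqS hqa hqle
    by_cases hq2 : 2 ≤ S.count q
    · exact hUn q hqa hq2 hqle
    · have hq1 : S.count q = 1 := by
        have := count_pos_iff.2 hqS
        omega
      exact aux (S.idxOf a) q hqa hq1 hqle (by omega)
  -- move a to the bottom of le''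
  refine Or.inr ⟨fun x y => x = a ∨ (y ≠ a ∧ le'' x y), ?_, ?_, ?_, ?_⟩
  · refine { refl := ?_, trans := ?_, antisymm := ?_, total := ?_ }
    · intro x
      by_cases hx : x = a
      · exact Or.inl hx
      · exact Or.inr ⟨hx, hlin.toIsPartialOrder.toIsPreorder.toRefl.refl x⟩
    · intro x y z hxy hyz
      rcases hxy with h | ⟨hy, hxy⟩
      · exact Or.inl h
      · rcases hyz with h' | ⟨hz, hyz⟩
        · exact absurd h' hy
        · exact Or.inr ⟨hz, htrans _ _ _ hxy hyz⟩
    · intro x y hxy hyx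
      rcases hxy with h | ⟨hy, hxy⟩
      · rcases hyx with h' | ⟨hx, hyx⟩
        · exact h.trans h'.symm
        · exact absurd h hx
      · rcases hyx with h' | ⟨hx, hyx⟩
        · exact absurd h' hy
        · exact hanti _ _ hxy hyx
    · intro x y
      by_cases hx : x = a
      · exact Or.inl (Or.inl hx)
      · by_cases hy : y = a
        · exact Or.inr (Or.inl hy)
        · rcases htot x y with h | h
          · exact Or.inl (Or.inr ⟨hy, h⟩)
          · exact Or.inr (Or.inr ⟨hx, h⟩)
  · intro x y hxy
    by_cases hx : x = a
    · exact Or.inl hx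
    · have hy : y ≠ a := by
        intro h
        exact hx (hamin x (h ▸ hxy))
      exact Or.inr ⟨hy, hext _ _ hxy⟩
  · exact ⟨a, Set.mem_singleton a, fun x => Or.inl rfl⟩
  · intro p q r h1 hpq h2 hqr hsub
    rcases h2 with hq | ⟨hr, h2'⟩
    · -- q = a, so p = a as well, contradiction
      rcases h1 with hp | ⟨hq', h1'⟩
      · exact hpq (hp.trans hq.symm)
      · exact hq' hq
    · rcases h1 with hp | ⟨hq', h1'⟩
      · -- p = a : use the fact that a is below q
        rw [hp] at hsub
        have hqS : q ∈ S := hsub.subset (List.mem_cons_self)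
        have hqa : q ≠ a := fun h => hpq (hp.trans h.symm)
        have haq : le'' a q := by
          rcases htot q a with h | h
          · exact absurd h (fun h' => hMin q hqS hqa h')
          · exact h
        exact hnb a q r haq (Ne.symm hqa) h2' hqr hsub
      · exact hnb p q r h1' hpq h2' hqr hsub
end

section
/- For every n ≥ 2 and pairwise distinct colors x, y, a₀, a₁, …, a_{n-1}, the Type A sock ordering x a₀ y a_{n-1} x a_{n-2} a_{n-1} a_{n-3} a_{n-2} ⋯ a₀ a₁ (whose tail consists of the consecutive pairs a_i a_{i+1} for i = n-2 down to 0) is 2-bounded, not foot-sortable, and minimal, i.e., deleting any single entry yields a foot-sortable sock ordering. -/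
open List

universe u

variable {Γ : Type u}

set_option linter.unusedSectionVars false
set_option maxHeartbeats 1000000

namespace SockAux
variable {Γ : Type u} [DecidableEq Γ]

def W (a : ℕ → Γ) (m : ℕ) : List Γ :=
  ((List.range m).reverse).flatMap fun i => [a i, a (i + 1)]

lemma W_zero (a : ℕ → Γ) : W a 0 = [] := rfl

lemma W_succ (a : ℕ → Γ) (m : ℕ) : W a (m + 1) = a m :: a (m + 1) :: W a m := by
  simp [W, List.range_succ]

lemma mem_W {a : ℕ → Γ} {m : ℕ} {u : Γ} (hu : u ∈ W a m) : ∃ i, i ≤ m ∧ u = a i := by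
  induction m with
  | zero => simp [W_zero] at hu
  | succ m ih =>
    rw [W_succ] at hu
    rcases List.mem_cons.mp hu with rfl | hu
    · exact ⟨m, by omega, rfl⟩
    rcases List.mem_cons.mp hu with rfl | hu
    · exact ⟨m + 1, le_refl _, rfl⟩
    obtain ⟨i, hi, rfl⟩ := ih hu
    exact ⟨i, by omega, rfl⟩

lemma pair_sub_W {a : ℕ → Γ} {t m : ℕ} (h : t < m) : [a t, a (t + 1)] <+ W a m := by
  induction m with
  | zero => omega
  | succ m ih =>
    rw [W_succ]
    rcases Nat.lt_succ_iff_lt_or_eq.mp h with h' | rfl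
    · exact ((ih h').cons _).cons _
    · exact (List.nil_sublist _).cons₂ _ |>.cons₂ _

lemma mem_W_self {a : ℕ → Γ} {j m : ℕ} (hj : j ≤ m) (hm : 1 ≤ m) : a j ∈ W a m := by
  rcases Nat.lt_or_ge j m with h | h
  · exact (pair_sub_W h).subset (by simp)
  · have hjm : j = m := by omega
    subst hjm
    have h3 : [a (j - 1), a (j - 1 + 1)] <+ W a j := pair_sub_W (by omega)
    have h2 : j - 1 + 1 = j := by omega
    rw [h2] at h3
    exact h3.subset (by simp)

lemma sub_cons {l : List Γ} {c : Γ} {L : List Γ} (h : l <+ c :: L) :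
    l <+ L ∨ ∃ r, l = c :: r ∧ r <+ L := by
  match h with
  | .cons _ h => exact Or.inl h
  | .cons₂ _ h => exact Or.inr ⟨_, rfl, h⟩

section Inj
variable {n : ℕ} {a : ℕ → Γ}
  (hainj : ∀ i < n, ∀ j < n, a i = a j → i = j)

include hainj

lemma idx_W {m : ℕ} (hm : m + 1 ≤ n) {k : ℕ} (hk : k < n) (hu : a k ∈ W a m) :
    k ≤ m := by
  obtain ⟨i, hi, he⟩ := mem_W hu
  have := hainj k hk i (by omega) he
  omega

lemma L1 {m j k : ℕ} (hm : m + 1 ≤ n) (hj : j < n) (hk : k < n)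
    (sub : [a j, a k] <+ W a m) : k ≤ j + 1 := by
  induction m with
  | zero => simp [W_zero] at sub
  | succ m ih =>
    rw [W_succ] at sub
    rcases sub_cons sub with sub | ⟨r, hr, sub⟩
    · rcases sub_cons sub with sub | ⟨r, hr, sub⟩
      · exact ih (by omega) sub
      · obtain ⟨h1, h2⟩ := List.cons_eq_cons.mp hr
        subst h2
        have hj' : j = m + 1 := hainj j hj (m + 1) (by omega) h1
        have : k ≤ m := idx_W hainj (by omega) hk (List.singleton_sublist.mp sub)
        omega
    · obtain ⟨h1, h2⟩ := List.cons_eq_cons.mp hr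
      subst h2
      have hj' : j = m := hainj j hj m (by omega) h1
      rcases sub_cons sub with sub | ⟨r, hr, sub⟩
      · have : k ≤ m := idx_W hainj (by omega) hk (List.singleton_sublist.mp sub)
        omega
      · obtain ⟨h1', h2'⟩ := List.cons_eq_cons.mp hr
        have hk' : k = m + 1 := hainj k hk (m + 1) (by omega) h1'
        omega

lemma gamma {m j : ℕ} (hm : m + 1 ≤ n) (hj : j < 2 * m) :
    ∃ t, t < m ∧ ¬ ([a t, a (t + 1)] <+ (W a m).eraseIdx j) := by
  induction m generalizing j with
  | zero => omega
  | succ m ih =>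
    rw [W_succ]
    match j with
    | 0 =>
      refine ⟨m, by omega, fun h => ?_⟩
      rw [List.eraseIdx_cons_zero] at h
      rcases sub_cons h with h | ⟨r, hr, h⟩
      · have : m + 1 ≤ m := idx_W hainj (by omega) (by omega)
          (h.subset (by simp))
        omega
      · obtain ⟨h1, _⟩ := List.cons_eq_cons.mp hr
        have := hainj m (by omega) (m + 1) (by omega) h1
        omega
    | 1 =>
      refine ⟨m, by omega, fun h => ?_⟩
      rw [List.eraseIdx_cons_succ, List.eraseIdx_cons_zero] at h
      rcases sub_cons h with h | ⟨r, hr, h⟩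
      · have : m + 1 ≤ m := idx_W hainj (by omega) (by omega) (h.subset (by simp))
        omega
      · obtain ⟨h1, h2⟩ := List.cons_eq_cons.mp hr
        subst h2
        have : m + 1 ≤ m := idx_W hainj (by omega) (by omega)
          ((List.singleton_sublist.mp h))
        omega
    | (j + 2) =>
      obtain ⟨t, ht, hns⟩ := ih (by omega) (j := j) (by omega)
      refine ⟨t, by omega, fun h => ?_⟩
      rw [List.eraseIdx_cons_succ, List.eraseIdx_cons_succ] at h
      rcases sub_cons h with h | ⟨r, hr, h⟩
      · rcases sub_cons h with h | ⟨r, hr, h⟩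
        · exact hns h
        · obtain ⟨h1, _⟩ := List.cons_eq_cons.mp hr
          have := hainj t (by omega) (m + 1) (by omega) h1
          omega
      · obtain ⟨h1, _⟩ := List.cons_eq_cons.mp hr
        have := hainj t (by omega) m (by omega) h1
        omega

lemma count_W {m k : ℕ} (hm : m < n) (hk : k < n) :
    (W a m).count (a k) =
      (if k < m then 1 else 0) + (if 1 ≤ k ∧ k ≤ m then 1 else 0) := by
  induction m with
  | zero => simp [W_zero]; omega
  | succ m ih =>
    rw [W_succ]
    have e1 : (a m = a k) ↔ (m = k) :=
      ⟨fun h => hainj m (by omega) k hk h, fun h => by rw [h]⟩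
    have e2 : (a (m + 1) = a k) ↔ (m + 1 = k) :=
      ⟨fun h => hainj (m + 1) (by omega) k hk h, fun h => by rw [h]⟩
    simp only [List.count_cons, ih (by omega), beq_iff_eq, e1, e2]
    split_ifs <;> omega

lemma count_W_zero {m : ℕ} {z : Γ} (hz : ∀ i ≤ m, z ≠ a i) :
    (W a m).count z = 0 := by
  rw [List.count_eq_zero]
  intro hmem
  obtain ⟨i, hi, rfl⟩ := mem_W hmem
  exact hz i hi rfl

end Inj


lemma W_length (a : ℕ → Γ) (m : ℕ) : (W a m).length = 2 * m := by
  induction m with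
  | zero => rfl
  | succ m ih => rw [W_succ]; simp only [List.length_cons, ih]; omega


lemma footSortable_of_rank (S : List Γ) (r : Γ → ℕ)
    (hinj : ∀ u ∈ S, ∀ v ∈ S, r u = r v → u = v)
    (h : ∀ u v w : Γ, u ∈ S → v ∈ S → w ∈ S → r u < r v → r v < r w →
      ¬ ([v, w, u] <+ S)) :
    FootSortable S := by
  classical
  letI lo : LinearOrder Γ := @linearOrderOfSTO Γ WellOrderingRel inferInstance
    (Classical.decRel _)
  refine ⟨fun u v => r u < r v ∨ (r u = r v ∧ u ≤ v),
    { refl := fun u => Or.inr ⟨rfl, le_refl u⟩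
      trans := ?_
      antisymm := ?_
      total := ?_ }, ?_⟩
  · rintro u v w (h1 | ⟨h1, h1'⟩) (h2 | ⟨h2, h2'⟩)
    · exact Or.inl (h1.trans h2)
    · exact Or.inl (h2 ▸ h1)
    · exact Or.inl (h1 ▸ h2)
    · exact Or.inr ⟨h1.trans h2, h1'.trans h2'⟩
  · rintro u v (h1 | ⟨h1, h1'⟩) (h2 | ⟨h2, h2'⟩) <;> try omega
    exact le_antisymm h1' h2'
  · intro u v
    rcases lt_trichotomy (r u) (r v) with h1 | h1 | h1
    · exact Or.inl (Or.inl h1)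
    · rcases le_total u v with h2 | h2
      · exact Or.inl (Or.inr ⟨h1, h2⟩)
      · exact Or.inr (Or.inr ⟨h1.symm, h2⟩)
    · exact Or.inr (Or.inl h1)
  · intro p q s h1 hne1 h2 hne2 sub
    have hp : p ∈ S := sub.subset (by simp)
    have hq : q ∈ S := sub.subset (by simp)
    have hs : s ∈ S := sub.subset (by simp)
    have h1' : r p < r q := by
      rcases h1 with h1 | ⟨h1, _⟩
      · exact h1
      · exact absurd (hinj p hp q hq h1) hne1
    have h2' : r q < r s := by
      rcases h2 with h2 | ⟨h2, _⟩
      · exact h2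
      · exact absurd (hinj q hq s hs h2) hne2
    exact h p q s hp hq hs h1' h2' sub

def rk (a : ℕ → Γ) (x y : Γ) (n vx vy : ℕ) (f : ℕ → ℕ) : Γ → ℕ := fun u =>
  if u = x then vx else if u = y then vy
  else if h : ∃ i, i < n ∧ a i = u then f (Nat.find h) else n + 5

section RK
variable {n : ℕ} {a : ℕ → Γ} {x y : Γ} {vx vy : ℕ} {f : ℕ → ℕ}

lemma rk_x : rk a x y n vx vy f x = vx := by simp [rk]

lemma rk_y (hxy : x ≠ y) : rk a x y n vx vy f y = vy := by
  simp [rk, Ne.symm hxy]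

lemma rk_a (hax : ∀ i < n, a i ≠ x) (hay : ∀ i < n, a i ≠ y)
    (hainj : ∀ i < n, ∀ j < n, a i = a j → i = j)
    {k : ℕ} (hk : k < n) : rk a x y n vx vy f (a k) = f k := by
  have h1 : a k ≠ x := hax k hk
  have h2 : a k ≠ y := hay k hk
  have hex : ∃ i, i < n ∧ a i = a k := ⟨k, hk, rfl⟩
  simp only [rk, h1, if_false, h2, dif_pos hex]
  congr 1
  obtain ⟨h3, h4⟩ := Nat.find_spec hex
  exact hainj _ h3 _ hk h4

end RK

lemma triple_cons {v w u c : Γ} {L : List Γ} (h : [v, w, u] <+ c :: L) :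
    [v, w, u] <+ L ∨ (v = c ∧ [w, u] <+ L) := by
  rcases sub_cons h with h | ⟨r, hr, h⟩
  · exact Or.inl h
  · obtain ⟨h1, h2⟩ := List.cons_eq_cons.mp hr
    exact Or.inr ⟨h1, h2 ▸ h⟩

lemma pair_cons {w u c : Γ} {L : List Γ} (h : [w, u] <+ c :: L) :
    [w, u] <+ L ∨ (w = c ∧ [u] <+ L) := by
  rcases sub_cons h with h | ⟨r, hr, h⟩
  · exact Or.inl h
  · obtain ⟨h1, h2⟩ := List.cons_eq_cons.mp hr
    exact Or.inr ⟨h1, h2 ▸ h⟩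


section Main
variable {n : ℕ} {x y : Γ} {a : ℕ → Γ}
variable (hn : 2 ≤ n) (hxy : x ≠ y)
  (hax : ∀ i < n, a i ≠ x) (hay : ∀ i < n, a i ≠ y)
  (hainj : ∀ i < n, ∀ j < n, a i = a j → i = j)


include hn hxy hax hay hainj

lemma masterA (p1 p2 : Γ)
    (hp1 : p1 = x ∨ p1 = y ∨ p1 = a 0) (hp2 : p2 = x ∨ p2 = y ∨ p2 = a 0) :
    FootSortable (p1 :: p2 :: a (n - 1) :: x :: W a (n - 1)) := by
  set r := rk a x y n 1 0 (fun i => n - i + 1) with hrdef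
  have rx : r x = 1 := rk_x
  have ry : r y = 0 := rk_y hxy
  have ra : ∀ k, k < n → r (a k) = n - k + 1 := fun k hk => rk_a hax hay hainj hk
  have hW : ∀ z ∈ W a (n - 1), ∃ k, k < n ∧ z = a k := by
    intro z hz; obtain ⟨i, hi, rfl⟩ := mem_W hz; exact ⟨i, by omega, rfl⟩
  have shape : ∀ u ∈ (p1 :: p2 :: a (n - 1) :: x :: W a (n - 1)),
      u = x ∨ u = y ∨ ∃ k, k < n ∧ u = a k := by
    intro u hu
    rcases List.mem_cons.mp hu with rfl | hu
    · rcases hp1 with rfl | rfl | rfl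
      · exact Or.inl rfl
      · exact Or.inr (Or.inl rfl)
      · exact Or.inr (Or.inr ⟨0, by omega, rfl⟩)
    rcases List.mem_cons.mp hu with rfl | hu
    · rcases hp2 with rfl | rfl | rfl
      · exact Or.inl rfl
      · exact Or.inr (Or.inl rfl)
      · exact Or.inr (Or.inr ⟨0, by omega, rfl⟩)
    rcases List.mem_cons.mp hu with rfl | hu
    · exact Or.inr (Or.inr ⟨n - 1, by omega, rfl⟩)
    rcases List.mem_cons.mp hu with rfl | hu
    · exact Or.inl rfl
    · exact Or.inr (Or.inr (hW u hu))
  apply footSortable_of_rank _ r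
  · intro u hu v hv he
    rcases shape u hu with rfl | rfl | ⟨k, hk, rfl⟩ <;>
      rcases shape v hv with rfl | rfl | ⟨l, hl, rfl⟩
    · rfl
    · rw [rx, ry] at he; omega
    · rw [rx, ra l hl] at he; omega
    · rw [ry, rx] at he; omega
    · rfl
    · rw [ry, ra l hl] at he; omega
    · rw [ra k hk, rx] at he; omega
    · rw [ra k hk, ry] at he; omega
    · rw [ra k hk, ra l hl] at he
      have hkl : k = l := by omega
      rw [hkl]
  · intro u v w hu hv hw h1 h2 sub
    have memcase1 : ∀ z : Γ, z ∈ a (n - 1) :: x :: W a (n - 1) →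
        (r z = n - (n - 1) + 1 ∨ r z = 1 ∨ ∃ m, m < n ∧ r z = n - m + 1) := by
      intro z hz
      rcases List.mem_cons.mp hz with h'' | hz
      · rw [h'', ra (n - 1) (by omega)]; exact Or.inl rfl
      rcases List.mem_cons.mp hz with h'' | hz
      · rw [h'', rx]; exact Or.inr (Or.inl rfl)
      · obtain ⟨m, hm, hzm⟩ := hW z hz
        rw [hzm, ra m hm]
        exact Or.inr (Or.inr ⟨m, hm, rfl⟩)
    rcases triple_cons sub with sub | ⟨hv1, sub⟩
    · rcases triple_cons sub with sub | ⟨hv2, sub⟩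
      · rcases triple_cons sub with sub | ⟨hv3, sub⟩
        · rcases triple_cons sub with sub | ⟨hv4, sub⟩
          · -- [v,w,u] <+ W
            obtain ⟨i, hi, hvi⟩ := hW v (sub.subset (show v ∈ [v, w, u] by simp))
            obtain ⟨j, hj, hwj⟩ := hW w (sub.subset (show w ∈ [v, w, u] by simp))
            obtain ⟨m, hm, hum⟩ := hW u (sub.subset (show u ∈ [v, w, u] by simp))
            have hsub2 : [a j, a m] <+ W a (n - 1) := by
              have h5 : [w, u] <+ [v, w, u] := (List.Sublist.refl _).cons _
              have h6 := h5.trans sub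
              rwa [hwj, hum] at h6
            have hL := L1 hainj (by omega) hj hm hsub2
            rw [hum, hvi, ra m hm, ra i hi] at h1
            rw [hvi, hwj, ra i hi, ra j hj] at h2
            omega
          · -- v = x, [w,u] <+ W
            obtain ⟨m, hm, hum⟩ := hW u (sub.subset (show u ∈ [w, u] by simp))
            rw [hum, hv4, ra m hm, rx] at h1; omega
        · -- v = a (n-1), [w,u] <+ x :: W
          rcases pair_cons sub with sub | ⟨hw1, sub⟩
          · obtain ⟨m, hm, hum⟩ := hW u (sub.subset (show u ∈ [w, u] by simp))
            rw [hum, hv3, ra m hm, ra (n - 1) (by omega)] at h1; omega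
          · rw [hv3, hw1, ra (n - 1) (by omega), rx] at h2; omega
      · -- v = p2, [w,u] <+ a (n-1) :: x :: W
        rcases hp2 with h' | h' | h'
        · rw [hv2.trans h', rx] at h1
          have hu2 : u ∈ a (n - 1) :: x :: W a (n - 1) :=
            sub.subset (show u ∈ [w, u] by simp)
          rcases memcase1 u hu2 with h3 | h3 | ⟨m, hm, h3⟩ <;> omega
        · rw [hv2.trans h', ry] at h1; omega
        · rw [hv2.trans h', ra 0 (by omega)] at h2
          have hw2 : w ∈ a (n - 1) :: x :: W a (n - 1) :=
            sub.subset (show w ∈ [w, u] by simp)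
          rcases memcase1 w hw2 with h3 | h3 | ⟨m, hm, h3⟩ <;> omega
    · -- v = p1, [w,u] <+ p2 :: a(n-1) :: x :: W
      rcases hp1 with h' | h' | h'
      · rw [hv1.trans h', rx] at h1
        rcases pair_cons sub with sub | ⟨hw1, sub⟩
        · have hu2 : u ∈ a (n - 1) :: x :: W a (n - 1) :=
            sub.subset (show u ∈ [w, u] by simp)
          rcases memcase1 u hu2 with h3 | h3 | ⟨m, hm, h3⟩ <;> omega
        · have hu2 : u ∈ a (n - 1) :: x :: W a (n - 1) := List.singleton_sublist.mp sub
          rcases memcase1 u hu2 with h3 | h3 | ⟨m, hm, h3⟩ <;> omega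
      · rw [hv1.trans h', ry] at h1; omega
      · rw [hv1.trans h', ra 0 (by omega)] at h2
        have hw2 : w ∈ p2 :: a (n - 1) :: x :: W a (n - 1) :=
          sub.subset (show w ∈ [w, u] by simp)
        rcases List.mem_cons.mp hw2 with h'' | hw2
        · rcases hp2 with h3 | h3 | h3
          · rw [h''.trans h3, rx] at h2; omega
          · rw [h''.trans h3, ry] at h2; omega
          · rw [h''.trans h3, ra 0 (by omega)] at h2; omega
        · rcases memcase1 w hw2 with h3 | h3 | ⟨m, hm, h3⟩ <;> omega

lemma masterB1 (t : ℕ) (ht : t < n) (q : Γ) (hq : q = x ∨ q = a (n - 1))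
    (T'' : List Γ)
    (hTm : ∀ z ∈ T'', ∃ k, k < n ∧ z = a k)
    (hTL : ∀ j k, j < n → k < n → [a j, a k] <+ T'' → k ≤ j + 1)
    (hTg : t + 1 < n → ¬ ([a t, a (t + 1)] <+ T'')) :
    FootSortable (x :: a 0 :: y :: q :: T'') := by
  set r := rk a x y n 0 (n - t) (fun i => n - i + (if i ≤ t then 1 else 0)) with hrdef
  have rx : r x = 0 := rk_x
  have ry : r y = n - t := rk_y hxy
  have ra : ∀ k, k < n → r (a k) = n - k + (if k ≤ t then 1 else 0) :=
    fun k hk => rk_a hax hay hainj hk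
  have shape : ∀ u ∈ x :: a 0 :: y :: q :: T'',
      u = x ∨ u = y ∨ ∃ k, k < n ∧ u = a k := by
    intro u hu
    rcases List.mem_cons.mp hu with rfl | hu
    · exact Or.inl rfl
    rcases List.mem_cons.mp hu with rfl | hu
    · exact Or.inr (Or.inr ⟨0, by omega, rfl⟩)
    rcases List.mem_cons.mp hu with rfl | hu
    · exact Or.inr (Or.inl rfl)
    rcases List.mem_cons.mp hu with rfl | hu
    · rcases hq with h' | h'
      · exact Or.inl h'
      · exact Or.inr (Or.inr ⟨n - 1, by omega, h'⟩)
    · exact Or.inr (Or.inr (hTm u hu))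
  apply footSortable_of_rank _ r
  · intro u hu v hv he
    rcases shape u hu with h1 | h1 | ⟨k, hk, h1⟩ <;>
      rcases shape v hv with h2 | h2 | ⟨l, hl, h2⟩
    · rw [h1, h2]
    · exfalso; rw [h1, h2, rx, ry] at he; omega
    · exfalso; rw [h1, h2, rx, ra l hl] at he; split_ifs at he <;> omega
    · exfalso; rw [h1, h2, ry, rx] at he; omega
    · rw [h1, h2]
    · exfalso; rw [h1, h2, ry, ra l hl] at he; split_ifs at he <;> omega
    · exfalso; rw [h1, h2, ra k hk, rx] at he; split_ifs at he <;> omega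
    · exfalso; rw [h1, h2, ra k hk, ry] at he; split_ifs at he <;> omega
    · rw [h1, h2, ra k hk, ra l hl] at he
      have hkl : k = l := by split_ifs at he <;> omega
      rw [h1, h2, hkl]
  · intro u v w hu hv hw h1 h2 sub
    rcases triple_cons sub with sub | ⟨hv1, sub⟩
    · rcases triple_cons sub with sub | ⟨hv2, sub⟩
      · rcases triple_cons sub with sub | ⟨hv3, sub⟩
        · rcases triple_cons sub with sub | ⟨hv4, sub⟩
          · -- [v,w,u] <+ T''
            obtain ⟨i, hi, hvi⟩ := hTm v (sub.subset (show v ∈ [v, w, u] by simp))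
            obtain ⟨j, hj, hwj⟩ := hTm w (sub.subset (show w ∈ [v, w, u] by simp))
            obtain ⟨m, hm, hum⟩ := hTm u (sub.subset (show u ∈ [v, w, u] by simp))
            have hsub2 : [a j, a m] <+ T'' := by
              have h5 : [w, u] <+ [v, w, u] := (List.Sublist.refl _).cons _
              have h6 := h5.trans sub
              rwa [hwj, hum] at h6
            have hL := hTL j m hj hm hsub2
            rw [hum, hvi, ra m hm, ra i hi] at h1
            rw [hvi, hwj, ra i hi, ra j hj] at h2
            split_ifs at h1 h2 <;> omega
          · -- v = q, [w,u] <+ T''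
            rcases hq with h' | h'
            · rw [hv4.trans h', rx] at h1; omega
            · rw [hv4.trans h', ra (n - 1) (by omega)] at h1
              obtain ⟨m, hm, hum⟩ := hTm u (sub.subset (show u ∈ [w, u] by simp))
              rw [hum, ra m hm] at h1
              split_ifs at h1 <;> omega
        · -- v = y, [w,u] <+ q :: T''
          rw [hv3, ry] at h1 h2
          rcases pair_cons sub with sub | ⟨hw1, sub⟩
          · obtain ⟨j, hj, hwj⟩ := hTm w (sub.subset (show w ∈ [w, u] by simp))
            obtain ⟨m, hm, hum⟩ := hTm u (sub.subset (show u ∈ [w, u] by simp))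
            have hsub2 : [a j, a m] <+ T'' := by rwa [hwj, hum] at sub
            have hL := hTL j m hj hm hsub2
            rw [hwj, ra j hj] at h2
            rw [hum, ra m hm] at h1
            have hjm : j = t ∧ m = t + 1 := by
              split_ifs at h1 h2 <;> exact ⟨by omega, by omega⟩
            rw [hjm.1, hjm.2] at hsub2
            exact hTg (by omega) hsub2
          · rcases hq with h' | h'
            · rw [hw1.trans h', rx] at h2; omega
            · rw [hw1.trans h', ra (n - 1) (by omega)] at h2
              obtain ⟨m, hm, hum⟩ := hTm u (List.singleton_sublist.mp sub)
              rw [hum, ra m hm] at h1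
              split_ifs at h1 h2 <;> omega
      · -- v = a 0
        rw [hv2, ra 0 (by omega)] at h2
        have hw2 : w ∈ y :: q :: T'' := sub.subset (show w ∈ [w, u] by simp)
        rcases List.mem_cons.mp hw2 with h'' | hw2
        · rw [h'', ry] at h2; split_ifs at h2 <;> omega
        rcases List.mem_cons.mp hw2 with h'' | hw2
        · rcases hq with h' | h'
          · rw [h''.trans h', rx] at h2; split_ifs at h2 <;> omega
          · rw [h''.trans h', ra (n - 1) (by omega)] at h2; split_ifs at h2 <;> omega
        · obtain ⟨m, hm, hwm⟩ := hTm w hw2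
          rw [hwm, ra m hm] at h2; split_ifs at h2 <;> omega
    · rw [hv1, rx] at h1; omega

lemma masterB2 (t : ℕ) (ht : t + 1 < n) (T'' : List Γ)
    (hTm : ∀ z ∈ T'', ∃ k, k < n ∧ z = a k)
    (hTL : ∀ j k, j < n → k < n → [a j, a k] <+ T'' → k ≤ j + 1)
    (hTg : ¬ ([a t, a (t + 1)] <+ T'')) :
    FootSortable (x :: a 0 :: y :: a (n - 1) :: x :: T'') := by
  set r := rk a x y n 0 (n - t) (fun i => n - i + (if i ≤ t then 1 else 0)) with hrdef
  have rx : r x = 0 := rk_x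
  have ry : r y = n - t := rk_y hxy
  have ra : ∀ k, k < n → r (a k) = n - k + (if k ≤ t then 1 else 0) :=
    fun k hk => rk_a hax hay hainj hk
  have shape : ∀ u ∈ x :: a 0 :: y :: a (n - 1) :: x :: T'',
      u = x ∨ u = y ∨ ∃ k, k < n ∧ u = a k := by
    intro u hu
    rcases List.mem_cons.mp hu with rfl | hu
    · exact Or.inl rfl
    rcases List.mem_cons.mp hu with rfl | hu
    · exact Or.inr (Or.inr ⟨0, by omega, rfl⟩)
    rcases List.mem_cons.mp hu with rfl | hu
    · exact Or.inr (Or.inl rfl)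
    rcases List.mem_cons.mp hu with rfl | hu
    · exact Or.inr (Or.inr ⟨n - 1, by omega, rfl⟩)
    rcases List.mem_cons.mp hu with rfl | hu
    · exact Or.inl rfl
    · exact Or.inr (Or.inr (hTm u hu))
  apply footSortable_of_rank _ r
  · intro u hu v hv he
    rcases shape u hu with h1 | h1 | ⟨k, hk, h1⟩ <;>
      rcases shape v hv with h2 | h2 | ⟨l, hl, h2⟩
    · rw [h1, h2]
    · exfalso; rw [h1, h2, rx, ry] at he; omega
    · exfalso; rw [h1, h2, rx, ra l hl] at he; split_ifs at he <;> omega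
    · exfalso; rw [h1, h2, ry, rx] at he; omega
    · rw [h1, h2]
    · exfalso; rw [h1, h2, ry, ra l hl] at he; split_ifs at he <;> omega
    · exfalso; rw [h1, h2, ra k hk, rx] at he; split_ifs at he <;> omega
    · exfalso; rw [h1, h2, ra k hk, ry] at he; split_ifs at he <;> omega
    · rw [h1, h2, ra k hk, ra l hl] at he
      have hkl : k = l := by split_ifs at he <;> omega
      rw [h1, h2, hkl]
  · intro u v w hu hv hw h1 h2 sub
    rcases triple_cons sub with sub | ⟨hv1, sub⟩
    · rcases triple_cons sub with sub | ⟨hv2, sub⟩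
      · rcases triple_cons sub with sub | ⟨hv3, sub⟩
        · rcases triple_cons sub with sub | ⟨hv4, sub⟩
          · rcases triple_cons sub with sub | ⟨hv5, sub⟩
            · -- [v,w,u] <+ T''
              obtain ⟨i, hi, hvi⟩ := hTm v (sub.subset (show v ∈ [v, w, u] by simp))
              obtain ⟨j, hj, hwj⟩ := hTm w (sub.subset (show w ∈ [v, w, u] by simp))
              obtain ⟨m, hm, hum⟩ := hTm u (sub.subset (show u ∈ [v, w, u] by simp))
              have hsub2 : [a j, a m] <+ T'' := by
                have h5 : [w, u] <+ [v, w, u] := (List.Sublist.refl _).cons _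
                have h6 := h5.trans sub
                rwa [hwj, hum] at h6
              have hL := hTL j m hj hm hsub2
              rw [hum, hvi, ra m hm, ra i hi] at h1
              rw [hvi, hwj, ra i hi, ra j hj] at h2
              split_ifs at h1 h2 <;> omega
            · rw [hv5, rx] at h1; omega
          · -- v = a (n-1), [w,u] <+ x :: T''
            rw [hv4, ra (n - 1) (by omega)] at h1
            rcases pair_cons sub with sub | ⟨hw1, sub⟩
            · obtain ⟨m, hm, hum⟩ := hTm u (sub.subset (show u ∈ [w, u] by simp))
              rw [hum, ra m hm] at h1
              split_ifs at h1 <;> omega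
            · rw [hv4, ra (n - 1) (by omega), hw1, rx] at h2
              split_ifs at h2 <;> omega
        · -- v = y, [w,u] <+ a (n-1) :: x :: T''
          rw [hv3, ry] at h1 h2
          rcases pair_cons sub with sub | ⟨hw1, sub⟩
          · rcases pair_cons sub with sub | ⟨hw1, sub⟩
            · obtain ⟨j, hj, hwj⟩ := hTm w (sub.subset (show w ∈ [w, u] by simp))
              obtain ⟨m, hm, hum⟩ := hTm u (sub.subset (show u ∈ [w, u] by simp))
              have hsub2 : [a j, a m] <+ T'' := by rwa [hwj, hum] at sub
              have hL := hTL j m hj hm hsub2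
              rw [hwj, ra j hj] at h2
              rw [hum, ra m hm] at h1
              have hjm : j = t ∧ m = t + 1 := by
                split_ifs at h1 h2 <;> exact ⟨by omega, by omega⟩
              rw [hjm.1, hjm.2] at hsub2
              exact hTg hsub2
            · rw [hw1, rx] at h2; omega
          · rw [hw1, ra (n - 1) (by omega)] at h2
            split_ifs at h2 <;> omega
      · -- v = a 0
        rw [hv2, ra 0 (by omega)] at h2
        have hw2 : w ∈ y :: a (n - 1) :: x :: T'' := sub.subset (show w ∈ [w, u] by simp)
        rcases List.mem_cons.mp hw2 with h'' | hw2
        · rw [h'', ry] at h2; split_ifs at h2 <;> omega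
        rcases List.mem_cons.mp hw2 with h'' | hw2
        · rw [h'', ra (n - 1) (by omega)] at h2; split_ifs at h2 <;> omega
        rcases List.mem_cons.mp hw2 with h'' | hw2
        · rw [h'', rx] at h2; split_ifs at h2 <;> omega
        · obtain ⟨m, hm, hwm⟩ := hTm w hw2
          rw [hwm, ra m hm] at h2; split_ifs at h2 <;> omega
    · rw [hv1, rx] at h1; omega


lemma typeA_not_fs : ¬ FootSortable (x :: a 0 :: y :: a (n - 1) :: x :: W a (n - 1)) := by
  rintro ⟨le, hlin, hnb⟩
  haveI : IsLinearOrder Γ le := hlin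
  set S := x :: a 0 :: y :: a (n - 1) :: x :: W a (n - 1) with hS
  have total : ∀ u v : Γ, le u v ∨ le v u := fun u v => Std.Total.total u v
  have anti : ∀ u v : Γ, le u v → le v u → u = v := fun u v h1 h2 => _root_.antisymm h1 h2
  -- distinctness
  have nxa : ∀ i, i < n → x ≠ a i := fun i hi h => hax i hi h.symm
  have nya : ∀ i, i < n → y ≠ a i := fun i hi h => hay i hi h.symm
  have naa : ∀ i j, i < n → j < n → i ≠ j → a i ≠ a j :=
    fun i j hi hj hne h => hne (hainj i hi j hj h)
  -- membership / sublist facts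
  have hmemW : ∀ j, j < n → a j ∈ W a (n - 1) :=
    fun j hj => mem_W_self (by omega) (by omega)
  have s1 : ∀ j, j < n → [a 0, x, a j] <+ S := by
    intro j hj
    exact ((((List.singleton_sublist.mpr (hmemW j hj)).cons₂ x).cons
      (a (n - 1))).cons y).cons₂ (a 0) |>.cons x
  have s2 : ∀ j, j < n - 1 → [a (n - 1), x, a j] <+ S := by
    intro j hj
    exact (((List.singleton_sublist.mpr (hmemW j (by omega))).cons₂ x).cons₂
      (a (n - 1))).cons y |>.cons (a 0) |>.cons x
  have s3 : [x, a 0, y] <+ S := by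
    exact ((List.nil_sublist _).cons₂ y).cons₂ (a 0) |>.cons₂ x
  have s4 : ∀ j, j < n → [x, a 0, a j] <+ S := by
    intro j hj
    exact ((((List.singleton_sublist.mpr (hmemW j hj)).cons x).cons
      (a (n - 1))).cons y).cons₂ (a 0) |>.cons₂ x
  have s5 : ∀ j, j < n - 1 → [x, a (n - 1), a j] <+ S := by
    intro j hj
    exact (((List.singleton_sublist.mpr (hmemW j (by omega))).cons x).cons₂
      (a (n - 1))).cons y |>.cons (a 0) |>.cons₂ x
  have s6 : [a 0, y, x] <+ S := by
    exact ((((List.nil_sublist _).cons₂ x).cons (a (n - 1))).cons₂ y).cons₂ (a 0) |>.cons x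
  have s7 : [y, a (n - 1), x] <+ S := by
    exact ((((List.nil_sublist _).cons₂ x).cons₂ (a (n - 1))).cons₂ y).cons (a 0) |>.cons x
  have s8 : ∀ t, t < n - 1 → [y, a t, a (t + 1)] <+ S := by
    intro t htl
    exact ((((pair_sub_W htl).cons x).cons (a (n - 1))).cons₂ y).cons (a 0) |>.cons x
  -- step A : le x (a 0)
  have hx0 : le x (a 0) := by
    by_contra hcon
    have h0x : le (a 0) x := (total x (a 0)).resolve_left hcon
    have hQ : ∀ j, 1 ≤ j → j < n → le (a 0) (a j) := by
      intro j h1 h2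
      rcases total (a 0) (a j) with h' | h'
      · exact h'
      · exact absurd (s1 j h2)
          (hnb (a j) (a 0) x h' (naa j 0 h2 (by omega) (by omega)) h0x (hax 0 (by omega)))
    have h0n : le (a 0) (a (n - 1)) := hQ (n - 1) (by omega) (by omega)
    rcases total x (a (n - 1)) with h' | h'
    · exact absurd (s5 0 (by omega))
        (hnb (a 0) x (a (n - 1)) h0x (Ne.symm (nxa 0 (by omega))) h' (nxa (n - 1) (by omega)))
    · exact absurd (s2 0 (by omega))
        (hnb (a 0) (a (n - 1)) x h0n (naa 0 (n - 1) (by omega) (by omega) (by omega))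
          h' (hax (n - 1) (by omega)))
  -- step B : le x y
  have hxy' : le x y := by
    rcases total x y with h | h
    · exact h
    · exact absurd s3 (hnb y x (a 0) h (Ne.symm hxy) hx0 (nxa 0 (by omega)))
  -- step D : le y (a 0)
  have hy0 : le y (a 0) := by
    rcases total y (a 0) with h | h
    · exact h
    · exact absurd s6 (hnb x (a 0) y hx0 (nxa 0 (by omega)) h (hay 0 (by omega)))
  -- step E : le (a (n-1)) y
  have hny : le (a (n - 1)) y := by
    rcases total (a (n - 1)) y with h | h
    · exact h
    · exact absurd s7 (hnb x y (a (n - 1)) hxy' hxy h (nya (n - 1) (by omega)))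
  -- step F : ∀ i < n, le y (a i)
  have key : ∀ i, i < n → le y (a i) := by
    intro i
    induction i with
    | zero => intro _; exact hy0
    | succ i ih =>
      intro hi
      have hyi := ih (by omega)
      rcases total y (a (i + 1)) with h | h
      · exact h
      · exact absurd (s8 i (by omega))
          (hnb (a (i + 1)) y (a i) h (hay (i + 1) hi) hyi (nya i (by omega)))
  exact (nya (n - 1) (by omega)) (anti y (a (n - 1)) (key (n - 1) (by omega)) hny)

lemma typeA_two_bounded :
    ∀ z : Γ, (x :: a 0 :: y :: a (n - 1) :: x :: W a (n - 1)).count z ≤ 2 := by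
  intro z
  simp only [List.count_cons, beq_iff_eq]
  by_cases hzx : z = x
  · subst hzx
    have hW0 : (W a (n - 1)).count z = 0 :=
      count_W_zero hainj (fun i hi h => hax i (by omega) h.symm)
    have e1 : ¬ (a 0 = z) := hax 0 (by omega)
    have e2 : ¬ (a (n - 1) = z) := hax (n - 1) (by omega)
    have e3 : ¬ (y = z) := fun h => hxy h.symm
    simp [hW0, e1, e2, e3]
  by_cases hzy : z = y
  · subst hzy
    have hW0 : (W a (n - 1)).count z = 0 :=
      count_W_zero hainj (fun i hi h => hay i (by omega) h.symm)
    have e1 : ¬ (a 0 = z) := hay 0 (by omega)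
    have e2 : ¬ (a (n - 1) = z) := hay (n - 1) (by omega)
    have e3 : ¬ (x = z) := hxy
    simp [hW0, e1, e2, e3]
  by_cases hex : ∃ k, k < n ∧ z = a k
  · obtain ⟨k, hk, rfl⟩ := hex
    rw [count_W hainj (by omega) hk]
    have ex : ¬ (x = a k) := fun h => hax k hk h.symm
    have ey : ¬ (y = a k) := fun h => hay k hk h.symm
    have e4 : (a 0 = a k) = (0 = k) :=
      propext ⟨fun h => hainj 0 (by omega) k hk h, fun h => by rw [← h]⟩
    have e5 : (a (n - 1) = a k) = (n - 1 = k) :=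
      propext ⟨fun h => hainj (n - 1) (by omega) k hk h, fun h => by rw [← h]⟩
    simp only [e4, e5, if_neg ex, if_neg ey]
    split_ifs <;> omega
  · have hW0 : (W a (n - 1)).count z = 0 :=
      count_W_zero hainj (fun i hi h => hex ⟨i, by omega, h⟩)
    have e1 : ¬ (a 0 = z) := fun h => hex ⟨0, by omega, h.symm⟩
    have e2 : ¬ (a (n - 1) = z) := fun h => hex ⟨n - 1, by omega, h.symm⟩
    have e3 : ¬ (x = z) := fun h => hzx h.symm
    have e4 : ¬ (y = z) := fun h => hzy h.symm
    simp [hW0, e1, e2, e3, e4]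

end Main

end SockAux

/-- Every Type A sock ordering (n ≥ 2, pairwise distinct colors) is 2-bounded, not foot-sortable, and minimal. -/
theorem statement14 {Γ : Type u} [DecidableEq Γ] (n : ℕ) (hn : 2 ≤ n)
    (x y : Γ) (a : ℕ → Γ) (hxy : x ≠ y)
    (hax : ∀ i < n, a i ≠ x) (hay : ∀ i < n, a i ≠ y)
    (hainj : ∀ i < n, ∀ j < n, a i = a j → i = j) :
    TwoBounded (typeA a x y n) ∧ ¬ FootSortable (typeA a x y n) ∧
      ∀ i < (typeA a x y n).length, FootSortable ((typeA a x y n).eraseIdx i) := by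
  have hS : typeA a x y n = x :: a 0 :: y :: a (n - 1) :: x :: SockAux.W a (n - 1) := rfl
  refine ⟨?_, ?_, ?_⟩
  · intro z
    rw [hS]
    exact SockAux.typeA_two_bounded hn hxy hax hay hainj z
  · rw [hS]
    exact SockAux.typeA_not_fs hn hxy hax hay hainj
  · intro i hi
    rw [hS] at hi ⊢
    simp only [List.length_cons, SockAux.W_length] at hi
    have hTm : ∀ z ∈ SockAux.W a (n - 1), ∃ k, k < n ∧ z = a k := by
      intro z hz
      obtain ⟨i', hi', rfl⟩ := SockAux.mem_W hz
      exact ⟨i', by omega, rfl⟩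
    have hTL : ∀ j k, j < n → k < n → [a j, a k] <+ SockAux.W a (n - 1) → k ≤ j + 1 :=
      fun j k hj hk hsub => SockAux.L1 hainj (by omega) hj hk hsub
    match i, hi with
    | 0, _ =>
      simp only [List.eraseIdx_cons_zero]
      exact SockAux.masterA hn hxy hax hay hainj (a 0) y
        (Or.inr (Or.inr rfl)) (Or.inr (Or.inl rfl))
    | 1, _ =>
      simp only [List.eraseIdx_cons_succ, List.eraseIdx_cons_zero]
      exact SockAux.masterA hn hxy hax hay hainj x y
        (Or.inl rfl) (Or.inr (Or.inl rfl))
    | 2, _ =>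
      simp only [List.eraseIdx_cons_succ, List.eraseIdx_cons_zero]
      exact SockAux.masterA hn hxy hax hay hainj x (a 0)
        (Or.inl rfl) (Or.inr (Or.inr rfl))
    | 3, _ =>
      simp only [List.eraseIdx_cons_succ, List.eraseIdx_cons_zero]
      exact SockAux.masterB1 hn hxy hax hay hainj (n - 1) (by omega) x (Or.inl rfl)
        (SockAux.W a (n - 1)) hTm hTL (fun h => absurd h (by omega))
    | 4, _ =>
      simp only [List.eraseIdx_cons_succ, List.eraseIdx_cons_zero]
      exact SockAux.masterB1 hn hxy hax hay hainj (n - 1) (by omega) (a (n - 1))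
        (Or.inr rfl) (SockAux.W a (n - 1)) hTm hTL (fun h => absurd h (by omega))
    | (j + 5), hi =>
      simp only [List.eraseIdx_cons_succ]
      obtain ⟨t, ht, hg⟩ := SockAux.gamma hainj (m := n - 1) (by omega)
        (show j < 2 * (n - 1) by omega)
      exact SockAux.masterB2 hn hxy hax hay hainj t (by omega)
        ((SockAux.W a (n - 1)).eraseIdx j)
        (fun z hz => hTm z ((List.eraseIdx_sublist _ j).subset hz))
        (fun j' k hj hk hsub => hTL j' k hj hk (hsub.trans (List.eraseIdx_sublist _ j)))
        hg
end

section
/- For every n ≥ 3 and pairwise distinct colors x, y, a₀, a₁, …, a_{n-1}, the Type B' sock ordering a₀ y x a_{n-1} x y a_{n-2} a_{n-1} a_{n-3} a_{n-2} ⋯ a₀ a₁ (whose tail consists of the consecutive pairs a_i a_{i+1} for i = n-2 down to 0) is 2-bounded, not foot-sortable, and minimal, i.e., deleting any single entry yields a foot-sortable sock ordering. -/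
open List

universe u

variable {Γ : Type u}

/-! ### Auxiliary machinery for `statement16` -/

section Statement16Aux

/-- Characterization of length-3 sublists of a map over a range. -/
lemma aux_triple_sublist {f : ℕ → Γ} {L : ℕ} {p q r : Γ} :
    [p, q, r] <+ (List.range L).map f ↔
      ∃ i j k : ℕ, i < j ∧ j < k ∧ k < L ∧ f i = p ∧ f j = q ∧ f k = r := by
  have hL : ((List.range L).map f).length = L := by simp
  constructor
  · intro h
    obtain ⟨is, his, hpw⟩ := List.sublist_eq_map_getElem h
    rcases is with _ | ⟨i, _ | ⟨j, _ | ⟨k, _ | t⟩⟩⟩ <;> simp at his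
    obtain ⟨h1, h2, h3⟩ := his
    obtain ⟨hi1, hpw2⟩ := List.pairwise_cons.mp hpw
    obtain ⟨hj1, -⟩ := List.pairwise_cons.mp hpw2
    refine ⟨i, j, k, ?_, ?_, ?_, h1.symm, h2.symm, h3.symm⟩
    · exact hi1 j (by simp)
    · exact hj1 k (by simp)
    · exact lt_of_lt_of_le k.isLt (le_of_eq hL)
  · rintro ⟨i, j, k, hij, hjk, hk, rfl, rfl, rfl⟩
    have hi' : i < ((List.range L).map f).length := by rw [hL]; omega
    have hj' : j < ((List.range L).map f).length := by rw [hL]; omega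
    have hk' : k < ((List.range L).map f).length := by rw [hL]; omega
    have hpw : List.Pairwise (fun x1 x2 : Fin ((List.range L).map f).length => x1 < x2)
        [⟨i, hi'⟩, ⟨j, hj'⟩, ⟨k, hk'⟩] := by
      refine List.Pairwise.cons ?_ (List.Pairwise.cons ?_ (List.pairwise_singleton _ _))
      · intro b hb
        rcases List.mem_cons.mp hb with rfl | hb
        · exact Fin.mk_lt_mk.mpr hij
        · rw [List.mem_singleton] at hb
          subst hb
          exact Fin.mk_lt_mk.mpr (hij.trans hjk)
      · intro b hb
        rw [List.mem_singleton] at hb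
        subst hb
        exact Fin.mk_lt_mk.mpr hjk
    have h := List.map_getElem_sublist hpw
    simpa using h

/-- `eraseIdx` of a map over a range is again a map over a range. -/
lemma aux_eraseIdx_map_range (f : ℕ → Γ) (L d : ℕ) (hd : d < L) :
    ((List.range L).map f).eraseIdx d =
      (List.range (L - 1)).map fun m => f (if m < d then m else m + 1) := by
  apply List.ext_getElem
  · simp [List.length_eraseIdx, hd]
  · intro m h1 h2
    rw [List.getElem_eraseIdx]
    by_cases h : m < d
    · rw [dif_pos h]
      simp [h]
    · rw [dif_neg h]
      simp [h]

/-- Build a foot-sorting linear order from a rank function. -/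
lemma aux_footSortable_of_rank (S : List Γ) (r : Γ → ℕ)
    (hinj : ∀ u ∈ S, ∀ v ∈ S, r u = r v → u = v)
    (hav : ∀ b c a : Γ, [b, c, a] <+ S → r a < r b → r b < r c → False) :
    FootSortable S := by
  classical
  let le' : Γ → Γ → Prop := fun u v => r u < r v ∨ (r u = r v ∧ (u = v ∨ WellOrderingRel u v))
  have woTrans : ∀ {p q s : Γ}, WellOrderingRel p q → WellOrderingRel q s →
      WellOrderingRel p s := fun h1 h2 => _root_.trans h1 h2
  have woIrr : ∀ p : Γ, ¬ WellOrderingRel p p := fun p h => (irrefl p) h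
  have woTri : ∀ p q : Γ, WellOrderingRel p q ∨ p = q ∨ WellOrderingRel q p :=
    fun p q => trichotomous p q
  haveI hR : IsRefl Γ le' := ⟨fun u => Or.inr ⟨rfl, Or.inl rfl⟩⟩
  haveI hT : IsTrans Γ le' := by
    refine ⟨fun u v w h1 h2 => ?_⟩
    rcases h1 with h1 | ⟨e1, h1⟩
    · rcases h2 with h2 | ⟨e2, h2⟩
      · exact Or.inl (h1.trans h2)
      · exact Or.inl (by omega)
    · rcases h2 with h2 | ⟨e2, h2⟩
      · exact Or.inl (by omega)
      · refine Or.inr ⟨e1.trans e2, ?_⟩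
        rcases h1 with rfl | h1
        · exact h2
        · rcases h2 with rfl | h2
          · exact Or.inr h1
          · exact Or.inr (woTrans h1 h2)
  haveI hA : IsAntisymm Γ le' := by
    refine ⟨fun u v h1 h2 => ?_⟩
    rcases h1 with h1 | ⟨e1, h1⟩
    · rcases h2 with h2 | ⟨e2, h2⟩ <;> omega
    · rcases h2 with h2 | ⟨e2, h2⟩
      · omega
      · rcases h1 with rfl | h1
        · rfl
        · rcases h2 with rfl | h2
          · rfl
          · exact absurd (woTrans h1 h2) (woIrr u)
  haveI hTot : IsTotal Γ le' := by
    refine ⟨fun u v => ?_⟩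
    rcases Nat.lt_trichotomy (r u) (r v) with h | h | h
    · exact Or.inl (Or.inl h)
    · rcases woTri u v with hw | rfl | hw
      · exact Or.inl (Or.inr ⟨h, Or.inr hw⟩)
      · exact Or.inl (Or.inr ⟨rfl, Or.inl rfl⟩)
      · exact Or.inr (Or.inr ⟨h.symm, Or.inr hw⟩)
    · exact Or.inr (Or.inl h)
  haveI : IsPreorder Γ le' := {}
  haveI : IsPartialOrder Γ le' := {}
  have hlin : IsLinearOrder Γ le' := {}
  refine ⟨le', hlin, ?_⟩
  intro p q s hpq hne hqs hne2 hsub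
  have hpm : p ∈ S := hsub.subset (by simp)
  have hqm : q ∈ S := hsub.subset (by simp)
  have hsm : s ∈ S := hsub.subset (by simp)
  have h1 : r p < r q := by
    rcases hpq with h | ⟨e, _⟩
    · exact h
    · exact absurd (hinj p hpm q hqm e) hne
  have h2 : r q < r s := by
    rcases hqs with h | ⟨e, _⟩
    · exact h
    · exact absurd (hinj q hqm s hsm e) hne2
  exact hav q s p hsub h1 h2

/-- Position-to-color-code function for the Type B' ordering. -/
def bidx (n m : ℕ) : ℕ :=
  if m = 0 then 0 else if m = 1 then n + 1 else if m = 2 then n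
  else if m = 3 then n - 1 else if m = 4 then n else if m = 5 then n + 1
  else n - 2 - (m - 6) / 2 + (m - 6) % 2

/-- Position-to-color function for the Type B' ordering. -/
def bcol (a : ℕ → Γ) (x y : Γ) (n m : ℕ) : Γ :=
  if bidx n m = n then x else if bidx n m = n + 1 then y else a (bidx n m)

/-- Rank of a color code. -/
def brank (n vx vy c : ℕ) : ℕ :=
  if c = n then vx else if c = n + 1 then vy else 2 * (n - c)

lemma bidx_spec (n m : ℕ) (hn : 3 ≤ n) :
    (m = 0 ∧ bidx n m = 0) ∨ (m = 1 ∧ bidx n m = n + 1) ∨ (m = 2 ∧ bidx n m = n) ∨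
    (m = 3 ∧ bidx n m = n - 1) ∨ (m = 4 ∧ bidx n m = n) ∨ (m = 5 ∧ bidx n m = n + 1) ∨
    (6 ≤ m ∧ bidx n m = n - 2 - (m - 6) / 2 + (m - 6) % 2 ∧ bidx n m < n) := by
  unfold bidx
  split_ifs <;> omega

lemma rho_spec (n vx vy m : ℕ) (hn : 3 ≤ n) (hm : m < 2 * n + 4) :
    (m = 0 ∧ brank n vx vy (bidx n m) = 2 * n) ∨
    (m = 1 ∧ brank n vx vy (bidx n m) = vy) ∨
    (m = 2 ∧ brank n vx vy (bidx n m) = vx) ∨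
    (m = 3 ∧ brank n vx vy (bidx n m) = 2) ∨
    (m = 4 ∧ brank n vx vy (bidx n m) = vx) ∨
    (m = 5 ∧ brank n vx vy (bidx n m) = vy) ∨
    (6 ≤ m ∧ brank n vx vy (bidx n m) =
      4 + 2 * ((m - 6) / 2) - 2 * ((m - 6) % 2)) := by
  rcases bidx_spec n m hn with ⟨hm, hb⟩ | ⟨hm, hb⟩ | ⟨hm, hb⟩ | ⟨hm, hb⟩ | ⟨hm, hb⟩ |
    ⟨hm, hb⟩ | ⟨hm, hb, hlt⟩
  · refine Or.inl ⟨hm, ?_⟩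
    rw [hb]; unfold brank; rw [if_neg (by omega), if_neg (by omega)]; omega
  · refine Or.inr (Or.inl ⟨hm, ?_⟩)
    rw [hb]; unfold brank; rw [if_neg (by omega), if_pos rfl]
  · refine Or.inr (Or.inr (Or.inl ⟨hm, ?_⟩))
    rw [hb]; unfold brank; rw [if_pos rfl]
  · refine Or.inr (Or.inr (Or.inr (Or.inl ⟨hm, ?_⟩)))
    rw [hb]; unfold brank; rw [if_neg (by omega), if_neg (by omega)]; omega
  · refine Or.inr (Or.inr (Or.inr (Or.inr (Or.inl ⟨hm, ?_⟩))))
    rw [hb]; unfold brank; rw [if_pos rfl]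
  · refine Or.inr (Or.inr (Or.inr (Or.inr (Or.inr (Or.inl ⟨hm, ?_⟩)))))
    rw [hb]; unfold brank; rw [if_neg (by omega), if_pos rfl]
  · refine Or.inr (Or.inr (Or.inr (Or.inr (Or.inr (Or.inr ⟨hm, ?_⟩)))))
    rw [hb]; unfold brank; rw [if_neg (by omega), if_neg (by omega)]; omega

/-- The master avoidance lemma for the four deletion cases. -/
lemma master_avoid (n vx vy d : ℕ) (hn : 3 ≤ n)
    (hcase : (d = 0 ∧ vx = 0 ∧ vy = 2 * n + 1) ∨
      ((d = 1 ∨ d = 3 ∨ d = 4) ∧ vx = 0 ∧ vy = 1) ∨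
      ((d = 2 ∨ d = 5) ∧ vx = 1 ∧ vy = 0) ∨
      (6 ≤ d ∧ d < 2 * n + 4 ∧ vx = 0 ∧ vy = 3 + 2 * ((d - 6) / 2)))
    (i j k : ℕ) (hij : i < j) (hjk : j < k) (hk : k < 2 * n + 4)
    (hi' : i ≠ d) (hj' : j ≠ d) (hk' : k ≠ d) :
    ¬ (brank n vx vy (bidx n k) < brank n vx vy (bidx n i) ∧
        brank n vx vy (bidx n i) < brank n vx vy (bidx n j)) := by
  have Hi := rho_spec n vx vy i hn (by omega)
  have Hj := rho_spec n vx vy j hn (by omega)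
  have Hk := rho_spec n vx vy k hn (by omega)
  omega

end Statement16Aux

section Statement16Aux2

lemma tailPairs_succ (a : ℕ → Γ) (k : ℕ) :
    tailPairs a (k + 2) = a k :: a (k + 1) :: tailPairs a (k + 1) := by
  show ((List.range (k + 2 - 1)).reverse).flatMap _ = _
  rw [show k + 2 - 1 = k + 1 from rfl, List.range_succ, List.reverse_append]
  simp [tailPairs]

lemma tailPairs_eq (a : ℕ → Γ) :
    ∀ k, tailPairs a (k + 1) =
      (List.range (2 * k)).map (fun m => a (k - 1 - m / 2 + m % 2)) := by
  intro k
  induction k with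
  | zero => simp [tailPairs]
  | succ k ih =>
    rw [show k + 1 + 1 = k + 2 from rfl, tailPairs_succ, ih,
      show 2 * (k + 1) = 2 * k + 1 + 1 by ring,
      List.range_succ_eq_map, List.range_succ_eq_map]
    simp only [List.map_cons, List.map_map, Function.comp_apply]
    refine congrArg₂ _ ?_ (congrArg₂ _ ?_ ?_)
    · congr 1 <;> omega
    · congr 1 <;> omega
    · apply List.map_congr_left
      intro m _
      simp only [Function.comp_apply]
      congr 1 <;> omega

lemma bidx_vals (n : ℕ) : bidx n 0 = 0 ∧ bidx n 1 = n + 1 ∧ bidx n 2 = n ∧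
    bidx n 3 = n - 1 ∧ bidx n 4 = n ∧ bidx n 5 = n + 1 := by
  unfold bidx; norm_num

lemma bcol0 (a : ℕ → Γ) (x y : Γ) (n : ℕ) (hn : 3 ≤ n) : bcol a x y n 0 = a 0 := by
  unfold bcol; rw [(bidx_vals n).1, if_neg (by omega), if_neg (by omega)]

lemma bcol1 (a : ℕ → Γ) (x y : Γ) (n : ℕ) : bcol a x y n 1 = y := by
  unfold bcol; rw [(bidx_vals n).2.1, if_neg (by omega), if_pos rfl]

lemma bcol2 (a : ℕ → Γ) (x y : Γ) (n : ℕ) : bcol a x y n 2 = x := by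
  unfold bcol; rw [(bidx_vals n).2.2.1, if_pos rfl]

lemma bcol3 (a : ℕ → Γ) (x y : Γ) (n : ℕ) (hn : 3 ≤ n) :
    bcol a x y n 3 = a (n - 1) := by
  unfold bcol; rw [(bidx_vals n).2.2.2.1, if_neg (by omega), if_neg (by omega)]

lemma bcol4 (a : ℕ → Γ) (x y : Γ) (n : ℕ) : bcol a x y n 4 = x := by
  unfold bcol; rw [(bidx_vals n).2.2.2.2.1, if_pos rfl]

lemma bcol5 (a : ℕ → Γ) (x y : Γ) (n : ℕ) : bcol a x y n 5 = y := by
  unfold bcol; rw [(bidx_vals n).2.2.2.2.2, if_neg (by omega), if_pos rfl]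

lemma bidx_tail (n m : ℕ) : bidx n (6 + m) = n - 2 - m / 2 + m % 2 := by
  unfold bidx
  rw [if_neg (by omega), if_neg (by omega), if_neg (by omega), if_neg (by omega),
    if_neg (by omega), if_neg (by omega)]
  congr 1 <;> omega

lemma bcol_tail (a : ℕ → Γ) (x y : Γ) (n : ℕ) (hn : 3 ≤ n) (m : ℕ) :
    bcol a x y n (6 + m) = a (n - 2 - m / 2 + m % 2) := by
  unfold bcol
  rw [bidx_tail, if_neg (by omega), if_neg (by omega)]

lemma typeB'_eq (a : ℕ → Γ) (x y : Γ) (n : ℕ) (hn : 3 ≤ n) :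
    typeB' a x y n = (List.range (2 * n + 4)).map (bcol a x y n) := by
  obtain ⟨k, rfl⟩ : ∃ k, n = k + 3 := ⟨n - 3, by omega⟩
  have htail : tailPairs a (k + 3) =
      (List.range (2 * k + 4)).map fun m => a (k + 3 - 2 - m / 2 + m % 2) := by
    rw [show k + 3 = (k + 2) + 1 from rfl, tailPairs_eq,
      show 2 * (k + 2) = 2 * k + 4 by ring]
    apply List.map_congr_left
    intro m _
    congr 1 <;> omega
  rw [show 2 * (k + 3) + 4 = 6 + (2 * k + 4) by ring, List.range_add, List.map_append,
    show List.range 6 = [0, 1, 2, 3, 4, 5] from rfl]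
  simp only [List.map_cons, List.map_nil, List.map_map]
  rw [bcol0 a x y _ hn, bcol1, bcol2, bcol3 a x y _ hn, bcol4, bcol5]
  show typeB' a x y (k + 3) = _ ++ _
  unfold typeB'
  rw [htail]
  simp only [List.cons_append, List.nil_append]
  congr 6
  apply List.map_congr_left
  intro m _
  simp only [Function.comp_apply]
  rw [bcol_tail a x y _ hn]

end Statement16Aux2

section Statement16Aux3
variable [DecidableEq Γ]

/-- Rank function on colors. -/
noncomputable def rkf (a : ℕ → Γ) (x y : Γ) (n vx vy : ℕ) (u : Γ) : ℕ :=
  if u = x then vx else if u = y then vy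
  else if h : ∃ j, j < n ∧ u = a j then 2 * (n - Nat.find h) else 0

lemma rkf_x (a : ℕ → Γ) (x y : Γ) (n vx vy : ℕ) : rkf a x y n vx vy x = vx := by
  unfold rkf; rw [if_pos rfl]

lemma rkf_y (a : ℕ → Γ) (x y : Γ) (n vx vy : ℕ) (hxy : x ≠ y) :
    rkf a x y n vx vy y = vy := by
  unfold rkf; rw [if_neg (Ne.symm hxy), if_pos rfl]

lemma rkf_a (a : ℕ → Γ) (x y : Γ) (n vx vy : ℕ)
    (hax : ∀ i < n, a i ≠ x) (hay : ∀ i < n, a i ≠ y)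
    (hainj : ∀ i < n, ∀ j < n, a i = a j → i = j)
    (j : ℕ) (hj : j < n) : rkf a x y n vx vy (a j) = 2 * (n - j) := by
  unfold rkf
  rw [if_neg (hax j hj), if_neg (hay j hj)]
  have hex : ∃ i, i < n ∧ a j = a i := ⟨j, hj, rfl⟩
  rw [dif_pos hex]
  obtain ⟨h1, h2⟩ := Nat.find_spec hex
  rw [hainj _ h1 _ hj h2.symm]

lemma rkf_bcol (a : ℕ → Γ) (x y : Γ) (n vx vy : ℕ) (hn : 3 ≤ n) (hxy : x ≠ y)
    (hax : ∀ i < n, a i ≠ x) (hay : ∀ i < n, a i ≠ y)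
    (hainj : ∀ i < n, ∀ j < n, a i = a j → i = j) (m : ℕ) :
    rkf a x y n vx vy (bcol a x y n m) = brank n vx vy (bidx n m) := by
  have hc : bidx n m < n ∨ bidx n m = n ∨ bidx n m = n + 1 := by
    have := bidx_spec n m hn; omega
  unfold bcol brank
  rcases hc with h | h | h
  · rw [if_neg (show ¬ bidx n m = n by omega), if_neg (show ¬ bidx n m = n by omega),
      if_neg (show ¬ bidx n m = n + 1 by omega), if_neg (show ¬ bidx n m = n + 1 by omega)]
    exact rkf_a a x y n vx vy hax hay hainj _ h
  · rw [if_pos h, if_pos h]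
    exact rkf_x a x y n vx vy
  · rw [if_neg (show ¬ bidx n m = n by omega), if_neg (show ¬ bidx n m = n by omega),
      if_pos h, if_pos h]
    exact rkf_y a x y n vx vy hxy

lemma brank_cases (n vx vy c : ℕ) (hc : c < n ∨ c = n ∨ c = n + 1) :
    (c < n ∧ brank n vx vy c = 2 * (n - c)) ∨ (c = n ∧ brank n vx vy c = vx) ∨
      (c = n + 1 ∧ brank n vx vy c = vy) := by
  unfold brank; split_ifs <;> omega

lemma bcol_codes (a : ℕ → Γ) (x y : Γ) (n : ℕ) (hn : 3 ≤ n) (hxy : x ≠ y)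
    (hax : ∀ i < n, a i ≠ x) (hay : ∀ i < n, a i ≠ y)
    (hainj : ∀ i < n, ∀ j < n, a i = a j → i = j) (m1 m2 : ℕ)
    (h : bcol a x y n m1 = bcol a x y n m2) : bidx n m1 = bidx n m2 := by
  have hc1 : bidx n m1 < n ∨ bidx n m1 = n ∨ bidx n m1 = n + 1 := by
    have := bidx_spec n m1 hn; omega
  have hc2 : bidx n m2 < n ∨ bidx n m2 = n ∨ bidx n m2 = n + 1 := by
    have := bidx_spec n m2 hn; omega
  unfold bcol at h
  rcases hc1 with h1 | h1 | h1 <;> rcases hc2 with h2 | h2 | h2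
  · rw [if_neg (by omega), if_neg (by omega), if_neg (by omega), if_neg (by omega)] at h
    exact hainj _ h1 _ h2 h
  · rw [if_neg (by omega), if_neg (by omega), if_pos h2] at h
    exact absurd h (hax _ h1)
  · rw [if_neg (by omega), if_neg (by omega), if_neg (by omega), if_pos h2] at h
    exact absurd h (hay _ h1)
  · rw [if_pos h1, if_neg (by omega), if_neg (by omega)] at h
    exact absurd h.symm (hax _ h2)
  · omega
  · rw [if_pos h1, if_neg (by omega), if_pos h2] at h
    exact absurd h hxy
  · rw [if_neg (by omega), if_pos h1, if_neg (by omega), if_neg (by omega)] at h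
    exact absurd h.symm (hay _ h2)
  · rw [if_neg (by omega), if_pos h1, if_pos h2] at h
    exact absurd h.symm hxy
  · omega

/-- The key lemma for minimality: each deletion case is foot-sortable. -/
lemma minimal_case (a : ℕ → Γ) (x y : Γ) (n vx vy d : ℕ) (hn : 3 ≤ n)
    (hxy : x ≠ y) (hax : ∀ i < n, a i ≠ x) (hay : ∀ i < n, a i ≠ y)
    (hainj : ∀ i < n, ∀ j < n, a i = a j → i = j)
    (hcase : (d = 0 ∧ vx = 0 ∧ vy = 2 * n + 1) ∨
      ((d = 1 ∨ d = 3 ∨ d = 4) ∧ vx = 0 ∧ vy = 1) ∨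
      ((d = 2 ∨ d = 5) ∧ vx = 1 ∧ vy = 0) ∨
      (6 ≤ d ∧ d < 2 * n + 4 ∧ vx = 0 ∧ vy = 3 + 2 * ((d - 6) / 2))) :
    FootSortable ((typeB' a x y n).eraseIdx d) := by
  have hd : d < 2 * n + 4 := by omega
  rw [typeB'_eq a x y n hn, aux_eraseIdx_map_range _ _ _ hd]
  have hRK := rkf_bcol a x y n vx vy hn hxy hax hay hainj
  apply aux_footSortable_of_rank _ (rkf a x y n vx vy)
  · intro u hu v hv he
    simp only [List.mem_map, List.mem_range] at hu hv
    obtain ⟨m1, -, rfl⟩ := hu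
    obtain ⟨m2, -, rfl⟩ := hv
    rw [hRK, hRK] at he
    have hc1 : bidx n (if m1 < d then m1 else m1 + 1) < n ∨
        bidx n (if m1 < d then m1 else m1 + 1) = n ∨
        bidx n (if m1 < d then m1 else m1 + 1) = n + 1 := by
      have := bidx_spec n (if m1 < d then m1 else m1 + 1) hn; omega
    have hc2 : bidx n (if m2 < d then m2 else m2 + 1) < n ∨
        bidx n (if m2 < d then m2 else m2 + 1) = n ∨
        bidx n (if m2 < d then m2 else m2 + 1) = n + 1 := by
      have := bidx_spec n (if m2 < d then m2 else m2 + 1) hn; omega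
    have e1 := brank_cases n vx vy _ hc1
    have e2 := brank_cases n vx vy _ hc2
    have heq : bidx n (if m1 < d then m1 else m1 + 1) =
        bidx n (if m2 < d then m2 else m2 + 1) := by omega
    unfold bcol
    rw [heq]
  · intro b c a' hsub h1 h2
    obtain ⟨i, j, k, hij, hjk, hk, hb, hc2, ha⟩ := aux_triple_sublist.mp hsub
    subst hb hc2 ha
    rw [hRK] at h1 h2
    rw [hRK] at h1 h2
    refine master_avoid n vx vy d hn hcase
      (if i < d then i else i + 1) (if j < d then j else j + 1)
      (if k < d then k else k + 1) ?_ ?_ ?_ ?_ ?_ ?_ ⟨h1, h2⟩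
    all_goals split_ifs <;> omega

end Statement16Aux3


/-- Every Type B' sock ordering (n ≥ 3, pairwise distinct colors) is 2-bounded, not foot-sortable, and minimal. -/
theorem statement16 {Γ : Type u} [DecidableEq Γ] (n : ℕ) (hn : 3 ≤ n)
    (x y : Γ) (a : ℕ → Γ) (hxy : x ≠ y)
    (hax : ∀ i < n, a i ≠ x) (hay : ∀ i < n, a i ≠ y)
    (hainj : ∀ i < n, ∀ j < n, a i = a j → i = j) :
    TwoBounded (typeB' a x y n) ∧ ¬ FootSortable (typeB' a x y n) ∧
      ∀ i < (typeB' a x y n).length, FootSortable ((typeB' a x y n).eraseIdx i) := by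
  have hSeq := typeB'_eq a x y n hn
  refine ⟨?_, ?_, ?_⟩
  · -- TwoBounded
    intro c
    by_contra hcount
    have h3 : 3 ≤ (typeB' a x y n).count c := by omega
    have hsub : [c, c, c] <+ typeB' a x y n := by
      have h := List.replicate_sublist_iff.mpr h3
      simpa [List.replicate] using h
    rw [hSeq] at hsub
    obtain ⟨i, j, k, hij, hjk, hk, h1, h2, h3'⟩ := aux_triple_sublist.mp hsub
    have e1 : bidx n i = bidx n j :=
      bcol_codes a x y n hn hxy hax hay hainj i j (h1.trans h2.symm)
    have e2 : bidx n j = bidx n k :=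
      bcol_codes a x y n hn hxy hax hay hainj j k (h2.trans h3'.symm)
    have Si := bidx_spec n i hn
    have Sj := bidx_spec n j hn
    have Sk := bidx_spec n k hn
    omega
  · -- not FootSortable
    rintro ⟨le, hlin, hno⟩
    have htotal : ∀ u v : Γ, ¬ le u v → le v u := fun u v h =>
      (hlin.toTotal.total u v).resolve_left h
    have hanti : ∀ u v : Γ, le u v → le v u → u = v := fun u v h1 h2 =>
      hlin.toIsPartialOrder.toAntisymm.antisymm u v h1 h2
    have hsubT : ∀ (u v w : Γ) (i j k : ℕ), i < j → j < k → k < 2 * n + 4 →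
        bcol a x y n i = u → bcol a x y n j = v → bcol a x y n k = w →
        [u, v, w] <+ typeB' a x y n := by
      intro u v w i j k hij hjk hk h1 h2 h3
      rw [hSeq]
      exact aux_triple_sublist.mpr ⟨i, j, k, hij, hjk, hk, h1, h2, h3⟩
    have hpair : ∀ s t, s ≤ n - 2 → t ≤ 1 →
        bcol a x y n (6 + (2 * (n - 2 - s) + t)) = a (s + t) := by
      intro s t hs ht
      rw [bcol_tail a x y n hn]
      congr 1
      omega
    have hT1 : [x, y, a 0] <+ typeB' a x y n :=
      hsubT _ _ _ 2 5 (6 + (2 * (n - 2 - 0) + 0)) (by omega) (by omega) (by omega)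
        (bcol2 a x y n) (bcol5 a x y n) (hpair 0 0 (by omega) (by omega))
    have hT2 : [a 0, y, x] <+ typeB' a x y n :=
      hsubT _ _ _ 0 1 2 (by omega) (by omega) (by omega)
        (bcol0 a x y n hn) (bcol1 a x y n) (bcol2 a x y n)
    have hT3 : [y, a (n - 1), x] <+ typeB' a x y n :=
      hsubT _ _ _ 1 3 4 (by omega) (by omega) (by omega)
        (bcol1 a x y n) (bcol3 a x y n hn) (bcol4 a x y n)
    have hT4 : ∀ k, k ≤ n - 2 → [y, a k, a (k + 1)] <+ typeB' a x y n := by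
      intro k hk
      refine hsubT _ _ _ 5 (6 + (2 * (n - 2 - k) + 0)) (6 + (2 * (n - 2 - k) + 1))
        (by omega) (by omega) (by omega) (bcol5 a x y n)
        (hpair k 0 hk (by omega)) ?_
      rw [hpair k 1 hk (by omega)]
    have hT1' : [y, x, a 0] <+ typeB' a x y n :=
      hsubT _ _ _ 1 2 (6 + (2 * (n - 2 - 0) + 0)) (by omega) (by omega) (by omega)
        (bcol1 a x y n) (bcol2 a x y n) (hpair 0 0 (by omega) (by omega))
    have hT2' : [a 0, x, y] <+ typeB' a x y n :=
      hsubT _ _ _ 0 2 5 (by omega) (by omega) (by omega)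
        (bcol0 a x y n hn) (bcol2 a x y n) (bcol5 a x y n)
    have hT3' : [x, a (n - 1), y] <+ typeB' a x y n :=
      hsubT _ _ _ 2 3 5 (by omega) (by omega) (by omega)
        (bcol2 a x y n) (bcol3 a x y n hn) (bcol5 a x y n)
    have hT4' : ∀ k, k ≤ n - 2 → [x, a k, a (k + 1)] <+ typeB' a x y n := by
      intro k hk
      refine hsubT _ _ _ 4 (6 + (2 * (n - 2 - k) + 0)) (6 + (2 * (n - 2 - k) + 1))
        (by omega) (by omega) (by omega) (bcol4 a x y n)
        (hpair k 0 hk (by omega)) ?_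
      rw [hpair k 1 hk (by omega)]
    by_cases hxyle : le x y
    · -- case x ≤ y
      have hs1 : le x (a 0) := by
        by_contra h
        exact hno (a 0) x y (htotal _ _ h) (hax 0 (by omega)) hxyle hxy hT1
      have hs2 : le y (a 0) := by
        by_contra h
        exact hno x (a 0) y hs1 (fun e => hax 0 (by omega) e.symm) (htotal _ _ h)
          (hay 0 (by omega)) hT2
      have hs3 : le (a (n - 1)) y := by
        by_contra h
        exact hno x y (a (n - 1)) hxyle hxy (htotal _ _ h)
          (Ne.symm (hay (n - 1) (by omega))) hT3
      have hdown : ∀ t, t ≤ n - 1 → le (a (n - 1 - t)) y := by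
        intro t
        induction t with
        | zero => intro _; simpa using hs3
        | succ s ih =>
          intro hs
          have hprev : le (a (n - 1 - s)) y := ih (by omega)
          by_contra h
          have hkk : n - 1 - s = (n - 1 - (s + 1)) + 1 := by omega
          rw [hkk] at hprev
          exact hno (a ((n - 1 - (s + 1)) + 1)) y (a (n - 1 - (s + 1))) hprev
            (hay _ (by omega)) (htotal _ _ h) (fun e => hay _ (by omega) e.symm)
            (hT4 (n - 1 - (s + 1)) (by omega))
      have hfin : le (a 0) y := by
        have := hdown (n - 1) le_rfl
        simpa using this
      exact hay 0 (by omega) (hanti _ _ hfin hs2)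
    · -- case y ≤ x
      have hyx : le y x := htotal _ _ hxyle
      have hs1 : le y (a 0) := by
        by_contra h
        exact hno (a 0) y x (htotal _ _ h) (hay 0 (by omega)) hyx
          (Ne.symm hxy) hT1'
      have hs2 : le x (a 0) := by
        by_contra h
        exact hno y (a 0) x hs1 (fun e => hay 0 (by omega) e.symm) (htotal _ _ h)
          (hax 0 (by omega)) hT2'
      have hs3 : le (a (n - 1)) x := by
        by_contra h
        exact hno y x (a (n - 1)) hyx (Ne.symm hxy) (htotal _ _ h)
          (Ne.symm (hax (n - 1) (by omega))) hT3'
      have hdown : ∀ t, t ≤ n - 1 → le (a (n - 1 - t)) x := by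
        intro t
        induction t with
        | zero => intro _; simpa using hs3
        | succ s ih =>
          intro hs
          have hprev : le (a (n - 1 - s)) x := ih (by omega)
          by_contra h
          have hkk : n - 1 - s = (n - 1 - (s + 1)) + 1 := by omega
          rw [hkk] at hprev
          exact hno (a ((n - 1 - (s + 1)) + 1)) x (a (n - 1 - (s + 1))) hprev
            (hax _ (by omega)) (htotal _ _ h) (fun e => hax _ (by omega) e.symm)
            (hT4' (n - 1 - (s + 1)) (by omega))
      have hfin : le (a 0) x := by
        have := hdown (n - 1) le_rfl
        simpa using this
      exact hax 0 (by omega) (hanti _ _ hfin hs2)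
  · -- minimality
    intro d hd
    have hdlen : d < 2 * n + 4 := by
      rw [hSeq] at hd
      simpa using hd
    rcases (show d = 0 ∨ (d = 1 ∨ d = 3 ∨ d = 4) ∨ (d = 2 ∨ d = 5) ∨ 6 ≤ d by omega)
      with h | h | h | h
    · exact minimal_case a x y n 0 (2 * n + 1) d hn hxy hax hay hainj
        (Or.inl ⟨h, rfl, rfl⟩)
    · exact minimal_case a x y n 0 1 d hn hxy hax hay hainj
        (Or.inr (Or.inl ⟨h, rfl, rfl⟩))
    · exact minimal_case a x y n 1 0 d hn hxy hax hay hainj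
        (Or.inr (Or.inr (Or.inl ⟨h, rfl, rfl⟩)))
    · exact minimal_case a x y n 0 (3 + 2 * ((d - 6) / 2)) d hn hxy hax hay hainj
        (Or.inr (Or.inr (Or.inr ⟨h, hdlen, rfl, rfl⟩)))
end

section
/- If every letter of a string S occurs exactly once (i.e., all letters are lonely) and ≤ is a simple partial order on the alphabet of S, then (S, ≤) is foot-sortable. -/
open List

universe u

variable {Γ : Type u}

lemma aux_idx_stmt19 {Γ : Type u} [DecidableEq Γ] {S : List Γ} {x y : Γ}
    (hnd : S.Nodup) (h : [x, y] <+ S) : S.idxOf x < S.idxOf y := by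
  induction S with
  | nil => simp at h
  | cons a T ih =>
    have hna : a ∉ T := (nodup_cons.mp hnd).1
    have hndT : T.Nodup := (nodup_cons.mp hnd).2
    cases h with
    | cons _ h' =>
      have hyT : y ∈ T := h'.subset (by simp)
      have hya : y ≠ a := fun e => hna (e ▸ hyT)
      by_cases hxa : x = a
      · rw [hxa, idxOf_cons_self, idxOf_cons_ne _ (Ne.symm hya)]
        exact Nat.succ_pos _
      · rw [idxOf_cons_ne _ (Ne.symm hxa), idxOf_cons_ne _ (Ne.symm hya)]
        exact Nat.succ_lt_succ (ih hndT h')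
    | cons_cons _ h' =>
      have hyT : y ∈ T := h'.subset (by simp)
      have hya : y ≠ x := fun e => hna (e ▸ hyT)
      rw [idxOf_cons_self, idxOf_cons_ne _ (Ne.symm hya)]
      exact Nat.succ_pos _

/-- If every letter of `S` occurs exactly once and `le` is a simple partial order on the
alphabet of `S`, then `(S, le)` is foot-sortable. -/
theorem statement19 {Γ : Type u} [DecidableEq Γ] (S : List Γ) (le : Γ → Γ → Prop)
    (hpo : IsPartialOrder Γ le) (hsimp : SimpleOrder S le)
    (hlonely : ∀ x ∈ S, S.count x = 1) :
    PairFootSortable S le := by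
  classical
  obtain ⟨k, hk, hle⟩ := hsimp
  have hnd : S.Nodup := by
    rw [List.nodup_iff_count_le_one]
    intro a
    by_cases h : a ∈ S
    · exact le_of_eq (hlonely a h)
    · simp [List.count_eq_zero_of_not_mem h]
  letI : LinearOrder Γ := IsWellOrder.linearOrder WellOrderingRel
  set g : Γ → ℕ ×ₗ Γ := fun x => toLex (S.length - S.idxOf x, x) with hg
  have hginj : Function.Injective g := by
    intro x y h
    have := congrArg (fun p => (ofLex p).2) h
    simpa [hg] using this
  refine ⟨fun x y => g x ≤ g y, ?_, ?_, ?_⟩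
  · exact { refl := fun x => le_refl (g x)
            trans := fun x y z h1 h2 => le_trans h1 h2
            antisymm := fun x y h1 h2 => hginj (le_antisymm h1 h2)
            total := fun x y => le_total (g x) (g y) }
  · intro x y hxy
    rcases (hle y x).mp hxy with h | h
    · rw [h]
    · have hsub : [y, x] <+ S := h.trans (take_sublist k S)
      have hyS : y ∈ S := hsub.subset (by simp)
      have hxS : x ∈ S := hsub.subset (by simp)
      have hidx := aux_idx_stmt19 hnd hsub
      have hxlt := List.idxOf_lt_length_iff.mpr hxS
      refine le_of_lt (Prod.Lex.lt_iff.mpr (Or.inl ?_))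
      simp only [hg, ofLex_toLex]
      omega
  · intro a b c hab hne hbc hne2 hsub
    have hbc' : [b, c] <+ S := (by simp : [b,c] <+ [b,c,a]).trans hsub
    have hca' : [c, a] <+ S := (by simp : [c,a] <+ [b,c,a]).trans hsub
    have h1 := aux_idx_stmt19 hnd hbc'
    have h2 := aux_idx_stmt19 hnd hca'
    have haS : a ∈ S := hsub.subset (by simp)
    have hbS : b ∈ S := hsub.subset (by simp)
    have hcS : c ∈ S := hsub.subset (by simp)
    have hal := List.idxOf_lt_length_iff.mpr haS
    have hbl := List.idxOf_lt_length_iff.mpr hbS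
    have hcl := List.idxOf_lt_length_iff.mpr hcS
    rcases Prod.Lex.le_iff.mp hab with h | ⟨h, -⟩
    · rcases Prod.Lex.le_iff.mp hbc with h' | ⟨h', -⟩
      · simp only [hg, ofLex_toLex] at h h'
        omega
      · simp only [hg, ofLex_toLex] at h'
        exact hne2 ((List.idxOf_inj (y := c) hbS).mp (by omega))
    · simp only [hg, ofLex_toLex] at h
      exact hne ((List.idxOf_inj (y := b) haS).mp (by omega))
end
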